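/- arXiv:1908.02867 — 3 statements merged into one kernel-verified Lean document; each statement's English description precedes it below -/
import Mathlib

section
/- There exist absolute constants 0 < c ≤ C, independent of k and of the choices of the intervals I(J), such that for every K ∈ 𝐊: c·3^k·⟨w_k⟩_K ≤ ‖w_k‖*_K ≤ C·3^k·⟨w_k⟩_K. -/
open MeasureTheory Set Filter

noncomputable section

namespace RTpaper

/-- The half-open interval `[a, b)` represented by the pair `(a, b)`. -/
def ivSet (I : ℝ × ℝ) : Set ℝ := Set.Ico I.1 I.2

/-- The length of the interval represented by `I`. -/
def len (I : ℝ × ℝ) : ℝ := I.2 - I.1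

/-- The middle triadic child of an interval. -/
def mid (I : ℝ × ℝ) : ℝ × ℝ := (I.1 + (I.2 - I.1) / 3, I.2 - (I.2 - I.1) / 3)

/-- The families `𝐊ᵢ` of the Reguera–Thiele construction. -/
def Kfam (k : ℕ) : ℕ → Set (ℝ × ℝ)
  | 0 => {((0 : ℝ), (1 : ℝ))}
  | (i + 1) =>
      {I | ∃ K ∈ Kfam k i, ∃ j : ℕ, j < 3 ^ (k - 1) ∧
        I = ((mid K).1 + (j : ℝ) * ((3 : ℝ) ^ (1 - (k : ℤ)) * len (mid K)),
             (mid K).1 + ((j : ℝ) + 1) * ((3 : ℝ) ^ (1 - (k : ℤ)) * len (mid K)))}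

/-- The families `𝐉ᵢ` (of interest for `i ≥ 1`). -/
def Jfam (k i : ℕ) : Set (ℝ × ℝ) := {J | ∃ K ∈ Kfam k (i - 1), J = mid K}

/-- The family `𝐊 = ⋃ᵢ 𝐊ᵢ`. -/
def KK (k : ℕ) : Set (ℝ × ℝ) := ⋃ i, Kfam k i

/-- The family `𝐉 = ⋃_{i ≥ 1} 𝐉ᵢ`. -/
def JJ (k : ℕ) : Set (ℝ × ℝ) := ⋃ i, Jfam k (i + 1)

/-- The chosen triadic interval `I(J)` adjacent to `J` of length `3^{1-k}|J|`, encoded by a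
choice function `ch` deciding, for each `J`, whether `I(J)` lies to the right (`true`) or to
the left (`false`) of `J`. -/
def IJ (k : ℕ) (ch : ℝ × ℝ → Bool) (J : ℝ × ℝ) : ℝ × ℝ :=
  if ch J then (J.2, J.2 + (3 : ℝ) ^ (1 - (k : ℤ)) * len J)
  else (J.1 - (3 : ℝ) ^ (1 - (k : ℤ)) * len J, J.1)

/-- The weight `w_k = Σ_{i ≥ 1} Σ_{J ∈ 𝐉ᵢ} (3^k/(3^{k-1}+1))^i · 1_{I(J)}`. -/
def wgt (k : ℕ) (ch : ℝ × ℝ → Bool) (x : ℝ) : ℝ :=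
  ∑' i : ℕ, ∑' J : ↥(Jfam k (i + 1)),
    Set.indicator (ivSet (IJ k ch (J : ℝ × ℝ)))
      (fun _ => ((3 : ℝ) ^ k / ((3 : ℝ) ^ (k - 1) + 1)) ^ (i + 1)) x

/-- The weight `σ_k = w_k^{1-p}` on `{w_k > 0}`, and `0` elsewhere. -/
def sgm (p : ℝ) (k : ℕ) (ch : ℝ × ℝ → Bool) (x : ℝ) : ℝ :=
  if 0 < wgt k ch x then wgt k ch x ^ (1 - p) else 0

/-- `u(I) = ∫_I u`. -/
def mass (u : ℝ → ℝ) (I : ℝ × ℝ) : ℝ := ∫ x in ivSet I, u x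

/-- `⟨u⟩_I = u(I)/|I|`. -/
def avg (u : ℝ → ℝ) (I : ℝ × ℝ) : ℝ := mass u I / len I

/-- `ch_𝐊(K)`: the members of `𝐊_{i+1}` contained in `K ∈ 𝐊ᵢ`. -/
def chK (k : ℕ) (K : ℝ × ℝ) : Set (ℝ × ℝ) :=
  {K' | ∃ i, K ∈ Kfam k i ∧ K' ∈ Kfam k (i + 1) ∧ ivSet K' ⊆ ivSet K}

/-- Triadic intervals of `ℝ`. -/
def IsTriadic (I : ℝ × ℝ) : Prop :=
  ∃ n j : ℤ, I.1 = (j : ℝ) * (3 : ℝ) ^ (-n) ∧ I.2 = ((j : ℝ) + 1) * (3 : ℝ) ^ (-n)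

/-- Maximal members of `S` strictly contained in `R`. -/
def maxIn (S : Set (ℝ × ℝ)) (R : ℝ × ℝ) : Set (ℝ × ℝ) :=
  {Q | Q ∈ S ∧ ivSet Q ⊂ ivSet R ∧
    ∀ Q' ∈ S, ivSet Q ⊆ ivSet Q' → ivSet Q' ⊂ ivSet R → ivSet Q' = ivSet Q}

/-- Martingale `ε`-sparse families of (half-open) intervals. -/
def MSparse (ε : ℝ) (S : Set (ℝ × ℝ)) : Prop :=
  S.Countable ∧ (∀ I ∈ S, I.1 < I.2) ∧
    (∀ I ∈ S, ∀ J ∈ S, ivSet I ⊆ ivSet J ∨ ivSet J ⊆ ivSet I ∨ ivSet I ∩ ivSet J = ∅) ∧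
    ∀ R ∈ S, (∑' Q : ↥(maxIn S R), len (Q : ℝ × ℝ)) ≤ ε * len R

/-- `Σ_{I ∈ F} ⟨u⟩_I^q · ⟨v⟩_I · |I|`. -/
def sumTest (q : ℝ) (u v : ℝ → ℝ) (F : Set (ℝ × ℝ)) : ℝ :=
  ∑' I : ↥F, avg u (I : ℝ × ℝ) ^ q * avg v (I : ℝ × ℝ) * len (I : ℝ × ℝ)


/-- The weight `σ_k = 1/w_k` on `{w_k > 0}`, and `0` elsewhere (case `p = 2`). -/
def sgm2 (k : ℕ) (ch : ℝ × ℝ → Bool) (x : ℝ) : ℝ :=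
  if 0 < wgt k ch x then (wgt k ch x)⁻¹ else 0

/-- The Lorentz quasinorm `‖f‖_{Λ_φ(I)} = ∫_0^∞ φ(|{x ∈ I : f(x) > t}|/|I|) dt`. -/
def lorentz (φ : ℝ → ℝ) (f : ℝ → ℝ) (I : ℝ × ℝ) : ℝ :=
  ∫ t in Set.Ioi (0 : ℝ), φ ((volume {x | x ∈ ivSet I ∧ t < f x}).toReal / len I)

/-- The fundamental function `φ₀(s) = s(1 - log s)` of `L log L` (note `φ₀(0) = 0`,
as `Real.log 0 = 0`). -/
def phi0 (s : ℝ) : ℝ := s * (1 - Real.log s)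


/-! ### Auxiliary development for Lemma 5.5 -/

section Aux

variable {k : ℕ} {ch : ℝ × ℝ → Bool}

private lemma ico_inter_empty {a b c d : ℝ} (h : b ≤ c) :
    Set.Ico a b ∩ Set.Ico c d = ∅ := by
  apply Set.eq_empty_of_forall_notMem
  intro x hx
  obtain ⟨⟨_, h1⟩, h2, _⟩ := hx
  linarith

private lemma empty_of_subsets {s t u v : Set ℝ} (hsu : s ⊆ u) (htv : t ⊆ v)
    (h : u ∩ v = ∅) : s ∩ t = ∅ :=
  Set.eq_empty_of_subset_empty (h ▸ Set.inter_subset_inter hsu htv)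

lemma len_mid (K : ℝ × ℝ) : len (mid K) = len K / 3 := by
  simp only [mid, len]; ring

lemma mid_fst (K : ℝ × ℝ) : (mid K).1 = K.1 + len K / 3 := by simp [mid, len]
lemma mid_snd (K : ℝ × ℝ) : (mid K).2 = K.2 - len K / 3 := by simp [mid, len]

lemma mid_injective : Function.Injective mid := by
  rintro ⟨a, b⟩ ⟨c, d⟩ h
  simp only [mid, Prod.mk.injEq] at h
  obtain ⟨h1, h2⟩ := h
  have hac : a = c := by linarith
  have hbd : b = d := by linarith
  simp [hac, hbd]

/-- The child intervals used in the construction of `𝐊_{i+1}`. -/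
def chl (k : ℕ) (K : ℝ × ℝ) (j : ℕ) : ℝ × ℝ :=
  ((mid K).1 + (j : ℝ) * ((3 : ℝ) ^ (1 - (k : ℤ)) * len (mid K)),
   (mid K).1 + ((j : ℝ) + 1) * ((3 : ℝ) ^ (1 - (k : ℤ)) * len (mid K)))

lemma kfam_succ_iff {i : ℕ} {I : ℝ × ℝ} :
    I ∈ Kfam k (i + 1) ↔ ∃ K ∈ Kfam k i, ∃ j : ℕ, j < 3 ^ (k - 1) ∧ I = chl k K j :=
  Iff.rfl

lemma chl_mem {i j : ℕ} {K : ℝ × ℝ} (hK : K ∈ Kfam k i) (hj : j < 3 ^ (k - 1)) :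
    chl k K j ∈ Kfam k (i + 1) :=
  ⟨K, hK, j, hj, rfl⟩

lemma three_zpow_pos (n : ℤ) : (0 : ℝ) < 3 ^ n := by positivity

lemma three_zpow_mul (a b : ℤ) : (3 : ℝ) ^ a * 3 ^ b = 3 ^ (a + b) :=
  (zpow_add₀ (by norm_num : (3:ℝ) ≠ 0) a b).symm

lemma len_chl (K : ℝ × ℝ) (j : ℕ) :
    len (chl k K j) = (3 : ℝ) ^ (1 - (k : ℤ)) * (len K / 3) := by
  simp only [chl, len, mid]
  ring

lemma kfam_len (hk : 1 ≤ k) {i : ℕ} {K : ℝ × ℝ} (hK : K ∈ Kfam k i) :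
    len K = (3 : ℝ) ^ (-((k : ℤ) * i)) := by
  induction i generalizing K with
  | zero => simp only [Kfam, Set.mem_singleton_iff] at hK; subst hK; simp [len]
  | succ i ih =>
    obtain ⟨Q, hQ, j, hj, rfl⟩ := kfam_succ_iff.mp hK
    rw [len_chl, ih hQ]
    have h3 : (3:ℝ) ≠ 0 := by norm_num
    rw [div_eq_mul_inv, ← zpow_neg_one, ← mul_assoc, three_zpow_mul, three_zpow_mul]
    congr 1
    push_cast
    ring

lemma kfam_lt (hk : 1 ≤ k) {i : ℕ} {K : ℝ × ℝ} (hK : K ∈ Kfam k i) : K.1 < K.2 := by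
  have h := kfam_len hk hK
  have : (0:ℝ) < len K := h ▸ three_zpow_pos _
  simpa [len, sub_pos] using this

lemma kfam_le (hk : 1 ≤ k) {i : ℕ} {K : ℝ × ℝ} (hK : K ∈ Kfam k i) : K.1 ≤ K.2 :=
  (kfam_lt hk hK).le

lemma ivSet_mid_subset {K : ℝ × ℝ} (h : K.1 ≤ K.2) : ivSet (mid K) ⊆ ivSet K := by
  have hl : 0 ≤ len K := by simpa [len, sub_nonneg] using h
  apply Set.Ico_subset_Ico
  · rw [mid_fst]; linarith
  · rw [mid_snd]; linarith

lemma eps_mul_pow (hk : 1 ≤ k) : ((3 : ℕ) ^ (k - 1) : ℝ) * (3 : ℝ) ^ (1 - (k : ℤ)) = 1 := by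
  have : ((3 : ℕ) ^ (k - 1) : ℝ) = (3 : ℝ) ^ (((k:ℕ) - 1 : ℕ) : ℤ) := by
    push_cast
    rw [zpow_natCast]
  rw [this, three_zpow_mul]
  have : (((k:ℕ) - 1 : ℕ) : ℤ) + (1 - (k : ℤ)) = 0 := by omega
  rw [this, zpow_zero]

lemma chl_subset_mid (hk : 1 ≤ k) {K : ℝ × ℝ} {j : ℕ} (h : K.1 ≤ K.2)
    (hj : j < 3 ^ (k - 1)) : ivSet (chl k K j) ⊆ ivSet (mid K) := by
  have hl : 0 ≤ len K := by simpa [len, sub_nonneg] using h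
  have hlm : 0 ≤ len (mid K) := by rw [len_mid]; linarith
  have he : (0:ℝ) < (3 : ℝ) ^ (1 - (k : ℤ)) := three_zpow_pos _
  have hj' : ((j : ℝ) + 1) ≤ ((3 : ℕ) ^ (k - 1) : ℝ) := by
    exact_mod_cast Nat.succ_le_of_lt hj
  apply Set.Ico_subset_Ico
  · have : 0 ≤ (j : ℝ) * ((3 : ℝ) ^ (1 - (k : ℤ)) * len (mid K)) := by positivity
    simp only [chl]
    linarith
  · simp only [chl]
    have hmul : ((j : ℝ) + 1) * ((3 : ℝ) ^ (1 - (k : ℤ)) * len (mid K)) ≤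
        ((3 : ℕ) ^ (k - 1) : ℝ) * ((3 : ℝ) ^ (1 - (k : ℤ)) * len (mid K)) := by
      apply mul_le_mul_of_nonneg_right hj'
      positivity
    have h2 : ((3 : ℕ) ^ (k - 1) : ℝ) * ((3 : ℝ) ^ (1 - (k : ℤ)) * len (mid K)) =
        len (mid K) := by
      rw [← mul_assoc, eps_mul_pow hk, one_mul]
    have h3 : (mid K).2 = (mid K).1 + len (mid K) := by simp [len]
    linarith [hmul.trans_eq h2]

lemma chl_disj (hk : 1 ≤ k) {K : ℝ × ℝ} {j j' : ℕ} (h : K.1 ≤ K.2) (hne : j ≠ j') :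
    ivSet (chl k K j) ∩ ivSet (chl k K j') = ∅ := by
  have hl : 0 ≤ len K := by simpa [len, sub_nonneg] using h
  have hstep : 0 ≤ (3 : ℝ) ^ (1 - (k : ℤ)) * len (mid K) := by
    rw [len_mid]; positivity
  rcases Nat.lt_or_ge j j' with hlt | hge
  · apply ico_inter_empty
    simp only [chl]
    have : ((j : ℝ) + 1) ≤ (j' : ℝ) := by exact_mod_cast Nat.succ_le_of_lt hlt
    nlinarith
  · have hlt : j' < j := by omega
    rw [Set.inter_comm]
    apply ico_inter_empty
    simp only [chl]
    have : ((j' : ℝ) + 1) ≤ (j : ℝ) := by exact_mod_cast Nat.succ_le_of_lt hlt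
    nlinarith

lemma kfam_disj (hk : 1 ≤ k) {i : ℕ} :
    ∀ K ∈ Kfam k i, ∀ K' ∈ Kfam k i, K = K' ∨ ivSet K ∩ ivSet K' = ∅ := by
  induction i with
  | zero =>
    intro K hK K' hK'
    simp only [Kfam, Set.mem_singleton_iff] at hK hK'
    left; rw [hK, hK']
  | succ i ih =>
    intro K hK K' hK'
    obtain ⟨Q, hQ, j, hj, rfl⟩ := hK
    obtain ⟨Q', hQ', j', hj', rfl⟩ := hK'
    rcases ih Q hQ Q' hQ' with rfl | hdisj
    · rcases eq_or_ne j j' with rfl | hne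
      · left; rfl
      · right; exact chl_disj hk (kfam_le hk hQ) hne
    · right
      refine empty_of_subsets ?_ ?_ hdisj
      · exact (chl_subset_mid hk (kfam_le hk hQ) hj).trans (ivSet_mid_subset (kfam_le hk hQ))
      · exact (chl_subset_mid hk (kfam_le hk hQ') hj').trans (ivSet_mid_subset (kfam_le hk hQ'))

lemma kfam_eq_of_mem {i : ℕ} (hk : 1 ≤ k) {K A : ℝ × ℝ} (hK : K ∈ Kfam k i)
    (hA : A ∈ Kfam k i) {x : ℝ} (hx : x ∈ ivSet K) (hx' : x ∈ ivSet A) : K = A := by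
  rcases kfam_disj hk K hK A hA with h | h
  · exact h
  · exact absurd (Set.mem_inter hx hx') (by rw [h]; exact Set.notMem_empty x)

lemma kfam_anc (hk : 1 ≤ k) {i : ℕ} (r : ℕ) :
    ∀ K' ∈ Kfam k (i + r), ∃ K ∈ Kfam k i, ivSet K' ⊆ ivSet K := by
  induction r with
  | zero => exact fun K' h => ⟨K', h, subset_rfl⟩
  | succ r ih =>
    intro K' hK'
    obtain ⟨Q, hQ, j, hj, rfl⟩ := hK'
    obtain ⟨K, hK, hs⟩ := ih Q hQ
    exact ⟨K, hK,
      ((chl_subset_mid hk (kfam_le hk hQ) hj).trans (ivSet_mid_subset (kfam_le hk hQ))).trans hs⟩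

lemma kfam_anc' (hk : 1 ≤ k) {m i : ℕ} (hmi : m ≤ i) {K : ℝ × ℝ} (hK : K ∈ Kfam k i) :
    ∃ A ∈ Kfam k m, ivSet K ⊆ ivSet A := by
  have : K ∈ Kfam k (m + (i - m)) := by rwa [Nat.add_sub_cancel' hmi]
  exact kfam_anc hk (i - m) K this

end Aux


section Aux2

variable {k : ℕ} {ch : ℝ × ℝ → Bool}

/-- The base of the geometric weights. -/
def bk (k : ℕ) : ℝ := (3 : ℝ) ^ k / ((3 : ℝ) ^ (k - 1) + 1)

lemma wgt_def (x : ℝ) : wgt k ch x =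
    ∑' i : ℕ, ∑' J : ↥(Jfam k (i + 1)),
      Set.indicator (ivSet (IJ k ch (J : ℝ × ℝ))) (fun _ => bk k ^ (i + 1)) x := rfl

lemma jfam_succ_iff {m : ℕ} {J : ℝ × ℝ} :
    J ∈ Jfam k (m + 1) ↔ ∃ P ∈ Kfam k m, J = mid P := Iff.rfl

lemma eps_le_third (hk : 1 ≤ k) : (3 : ℝ) ^ (1 - (k : ℤ)) ≤ 1 := by
  apply zpow_le_one_of_nonpos₀
  · norm_num
  · omega

/-- `I(J)` lies inside the parent of `J`. -/
lemma IJ_subset_parent (hk : 1 ≤ k) {m : ℕ} {P : ℝ × ℝ} (hP : P ∈ Kfam k m) :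
    ivSet (IJ k ch (mid P)) ⊆ ivSet P := by
  have hPl : P.1 < P.2 := kfam_lt hk hP
  have hd1 : (mid P).1 = P.1 + (P.2 - P.1) / 3 := rfl
  have hd2 : (mid P).2 = P.2 - (P.2 - P.1) / 3 := rfl
  have he0 : (0:ℝ) < (3 : ℝ) ^ (1 - (k : ℤ)) := three_zpow_pos _
  have he1 : (3 : ℝ) ^ (1 - (k : ℤ)) ≤ 1 := eps_le_third hk
  have hX0 : 0 ≤ (3 : ℝ) ^ (1 - (k : ℤ)) * ((mid P).2 - (mid P).1) := by
    rw [hd1, hd2]; nlinarith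
  have hX1 : (3 : ℝ) ^ (1 - (k : ℤ)) * ((mid P).2 - (mid P).1) ≤ (P.2 - P.1) / 3 := by
    rw [hd1, hd2]; nlinarith
  have hlm : (3 : ℝ) ^ (1 - (k : ℤ)) * len (mid P) =
      (3 : ℝ) ^ (1 - (k : ℤ)) * ((mid P).2 - (mid P).1) := rfl
  unfold IJ
  split <;> apply Set.Ico_subset_Ico <;> dsimp only <;> linarith

/-- `I(J)` is disjoint from `J` itself. -/
lemma IJ_disj_self (hk : 1 ≤ k) {m : ℕ} {P : ℝ × ℝ} (hP : P ∈ Kfam k m) :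
    ivSet (IJ k ch (mid P)) ∩ ivSet (mid P) = ∅ := by
  unfold IJ
  split
  · rw [Set.inter_comm]
    exact ico_inter_empty le_rfl
  · exact ico_inter_empty le_rfl

lemma len_IJ (J : ℝ × ℝ) : len (IJ k ch J) = (3 : ℝ) ^ (1 - (k : ℤ)) * len J := by
  unfold IJ
  split <;> simp only [len] <;> ring

/-- `I(J)` is disjoint from every member of `𝐊_{m+1}` when `J ∈ 𝐉_{m+1}`. -/
lemma IJ_disj_kfam_succ (hk : 1 ≤ k) {m : ℕ} {P A : ℝ × ℝ} (hP : P ∈ Kfam k m)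
    (hA : A ∈ Kfam k (m + 1)) : ivSet (IJ k ch (mid P)) ∩ ivSet A = ∅ := by
  obtain ⟨Q, hQ, j, hj, rfl⟩ := kfam_succ_iff.mp hA
  rcases kfam_disj hk Q hQ P hP with rfl | hdisj
  · exact empty_of_subsets (subset_refl _) (chl_subset_mid hk (kfam_le hk hQ) hj)
      (IJ_disj_self hk hQ)
  · rw [Set.inter_comm]
    refine empty_of_subsets
      ((chl_subset_mid hk (kfam_le hk hQ) hj).trans (ivSet_mid_subset (kfam_le hk hQ)))
      (IJ_subset_parent hk hP) hdisj

/-- Full pairwise disjointness of the intervals `I(J)`. -/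
lemma IJ_pairwise_aux (hk : 1 ≤ k) {m m' : ℕ} {P P' : ℝ × ℝ} (hP : P ∈ Kfam k m)
    (hP' : P' ∈ Kfam k m') (hmm : m < m') :
    ivSet (IJ k ch (mid P)) ∩ ivSet (IJ k ch (mid P')) = ∅ := by
  obtain ⟨A, hA, hPA⟩ := kfam_anc' hk (show m + 1 ≤ m' by omega) hP'
  refine empty_of_subsets (subset_refl _) ((IJ_subset_parent hk hP').trans hPA) ?_
  exact IJ_disj_kfam_succ hk hP hA

lemma IJ_pairwise (hk : 1 ≤ k) {m m' : ℕ} {P P' : ℝ × ℝ} (hP : P ∈ Kfam k m)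
    (hP' : P' ∈ Kfam k m') (hne : ¬(m = m' ∧ mid P = mid P')) :
    ivSet (IJ k ch (mid P)) ∩ ivSet (IJ k ch (mid P')) = ∅ := by
  rcases Nat.lt_trichotomy m m' with h | rfl | h
  · exact IJ_pairwise_aux hk hP hP' h
  · have hPP : P ≠ P' := fun h => hne ⟨rfl, by rw [h]⟩
    rcases kfam_disj hk P hP P' hP' with h | h
    · exact absurd h hPP
    · exact empty_of_subsets (IJ_subset_parent hk hP) (IJ_subset_parent hk hP') h
  · rw [Set.inter_comm]
    exact IJ_pairwise_aux hk hP' hP h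

/-- Location lemma: a point of `K ∈ 𝐊ᵢ` lying in some `I(J)` forces `J` to be deeper than
`K` and inside `K`. -/
lemma mem_deeper (hk : 1 ≤ k) {i m : ℕ} {K P : ℝ × ℝ} {x : ℝ} (hK : K ∈ Kfam k i)
    (hP : P ∈ Kfam k m) (hxK : x ∈ ivSet K) (hxI : x ∈ ivSet (IJ k ch (mid P))) :
    ∃ s : ℕ, m = i + s ∧ ivSet (mid P) ⊆ ivSet K ∧ ivSet (IJ k ch (mid P)) ⊆ ivSet K := by
  have him : i ≤ m := by
    by_contra hlt
    push_neg at hlt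
    obtain ⟨A, hA, hKA⟩ := kfam_anc' hk (show m + 1 ≤ i by omega) hK
    have := IJ_disj_kfam_succ (ch := ch) hk hP hA
    exact absurd (Set.mem_inter hxI (hKA hxK)) (this ▸ Set.notMem_empty x)
  obtain ⟨A, hA, hPA⟩ := kfam_anc' hk him hP
  have hxA : x ∈ ivSet A := hPA (IJ_subset_parent hk hP hxI)
  have hKA : K = A := kfam_eq_of_mem hk hK hA hxK hxA
  subst hKA
  exact ⟨m - i, by omega, (ivSet_mid_subset (kfam_le hk hP)).trans hPA,
    (IJ_subset_parent hk hP).trans hPA⟩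

/-- Pointwise value of `wgt` on `I(J)`. -/
lemma wgt_eq_val (hk : 1 ≤ k) {m : ℕ} {P : ℝ × ℝ} {x : ℝ} (hP : P ∈ Kfam k m)
    (hx : x ∈ ivSet (IJ k ch (mid P))) : wgt k ch x = bk k ^ (m + 1) := by
  rw [wgt_def]
  have houter : ∀ i : ℕ, i ≠ m →
      (∑' J : ↥(Jfam k (i + 1)),
        Set.indicator (ivSet (IJ k ch (J : ℝ × ℝ))) (fun _ => bk k ^ (i + 1)) x) = 0 := by
    intro i hi
    have : ∀ J : ↥(Jfam k (i + 1)),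
        Set.indicator (ivSet (IJ k ch (J : ℝ × ℝ))) (fun _ => bk k ^ (i + 1)) x = 0 := by
      rintro ⟨J, hJ⟩
      obtain ⟨P', hP', rfl⟩ := jfam_succ_iff.mp hJ
      apply Set.indicator_of_notMem
      intro hx'
      have := IJ_pairwise (ch := ch) hk hP' hP (fun h => hi h.1)
      exact absurd (Set.mem_inter hx' hx) (this ▸ Set.notMem_empty x)
    simp only [this, tsum_zero]
  rw [tsum_eq_single m houter]
  have hmem : mid P ∈ Jfam k (m + 1) := ⟨P, hP, rfl⟩
  rw [tsum_eq_single (⟨mid P, hmem⟩ : ↥(Jfam k (m + 1))) ?_]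
  · exact Set.indicator_of_mem hx _
  · rintro ⟨J', hJ'⟩ hne
    obtain ⟨P', hP', rfl⟩ := jfam_succ_iff.mp hJ'
    apply Set.indicator_of_notMem
    intro hx'
    have hne' : ¬(m = m ∧ mid P' = mid P) := by
      rintro ⟨-, h⟩
      exact hne (Subtype.ext h)
    have := IJ_pairwise (ch := ch) hk hP' hP hne'
    exact absurd (Set.mem_inter hx' hx) (this ▸ Set.notMem_empty x)

/-- `wgt` vanishes off the union of the `I(J)`. -/
lemma wgt_eq_zero {x : ℝ}
    (hx : ∀ (m : ℕ) (P : ℝ × ℝ), P ∈ Kfam k m → x ∉ ivSet (IJ k ch (mid P))) :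
    wgt k ch x = 0 := by
  rw [wgt_def]
  have : ∀ i : ℕ, (∑' J : ↥(Jfam k (i + 1)),
      Set.indicator (ivSet (IJ k ch (J : ℝ × ℝ))) (fun _ => bk k ^ (i + 1)) x) = 0 := by
    intro i
    have : ∀ J : ↥(Jfam k (i + 1)),
        Set.indicator (ivSet (IJ k ch (J : ℝ × ℝ))) (fun _ => bk k ^ (i + 1)) x = 0 := by
      rintro ⟨J, hJ⟩
      obtain ⟨P', hP', rfl⟩ := jfam_succ_iff.mp hJ
      exact Set.indicator_of_notMem (hx i P' hP') _
    simp only [this, tsum_zero]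
  simp only [this, tsum_zero]

end Aux2


section Aux3

variable {k : ℕ} {ch : ℝ × ℝ → Bool}

lemma kfam_finite (k i : ℕ) : (Kfam k i).Finite := by
  induction i with
  | zero => exact Set.finite_singleton _
  | succ i ih =>
    have hsub : Kfam k (i + 1) ⊆
        (fun p : (ℝ × ℝ) × ℕ => chl k p.1 p.2) '' (Kfam k i ×ˢ Set.Iio (3 ^ (k - 1))) := by
      intro K hK
      obtain ⟨Q, hQ, j, hj, rfl⟩ := kfam_succ_iff.mp hK
      exact ⟨(Q, j), ⟨hQ, hj⟩, rfl⟩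
    exact ((ih.prod (Set.finite_Iio _)).image _).subset hsub

lemma jfam_finite (k m : ℕ) : (Jfam k (m + 1)).Finite := by
  refine ((kfam_finite k m).image mid).subset ?_
  rintro J ⟨P, hP, rfl⟩
  exact ⟨P, hP, rfl⟩

/-- The members of `𝐉_{i+s+1}` contained in `K`. -/
def lvl (k i s : ℕ) (K : ℝ × ℝ) : Set (ℝ × ℝ) :=
  {J | J ∈ Jfam k (i + s + 1) ∧ ivSet J ⊆ ivSet K}

/-- The union of the intervals `I(J)`, `J ∈ 𝐉_{i+s+1}`, `J ⊆ K`. -/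
def Ur (k : ℕ) (ch : ℝ × ℝ → Bool) (i s : ℕ) (K : ℝ × ℝ) : Set ℝ :=
  ⋃ J ∈ lvl k i s K, ivSet (IJ k ch J)

lemma lvl_finite (k i s : ℕ) (K : ℝ × ℝ) : (lvl k i s K).Finite :=
  (jfam_finite k (i + s)).subset fun _ hJ => hJ.1

lemma Ur_measurable (i s : ℕ) (K : ℝ × ℝ) : MeasurableSet (Ur k ch i s K) :=
  MeasurableSet.biUnion (lvl_finite k i s K).countable fun _ _ => measurableSet_Ico

lemma mid_mem_self (hk : 1 ≤ k) {m : ℕ} {P : ℝ × ℝ} (hP : P ∈ Kfam k m) :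
    (mid P).1 ∈ ivSet (mid P) := by
  have h := kfam_lt hk hP
  have h1 : (mid P).1 = P.1 + (P.2 - P.1) / 3 := rfl
  have h2 : (mid P).2 = P.2 - (P.2 - P.1) / 3 := rfl
  exact Set.left_mem_Ico.mpr (by rw [h1, h2]; linarith)

lemma lvl_parent (hk : 1 ≤ k) {i s : ℕ} {K J : ℝ × ℝ} (hK : K ∈ Kfam k i)
    (hJ : J ∈ lvl k i s K) :
    ∃ P ∈ Kfam k (i + s), J = mid P ∧ ivSet (IJ k ch J) ⊆ ivSet K := by
  obtain ⟨⟨P, hP, rfl⟩, hJK⟩ := hJ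
  obtain ⟨A, hA, hPA⟩ := kfam_anc' hk (Nat.le_add_right i s) hP
  have hy : (mid P).1 ∈ ivSet (mid P) := mid_mem_self hk hP
  have hKA : K = A :=
    kfam_eq_of_mem hk hK hA (hJK hy) (hPA (ivSet_mid_subset (kfam_le hk hP) hy))
  exact ⟨P, hP, rfl, hKA ▸ ((IJ_subset_parent hk hP).trans hPA)⟩

lemma Ur_subset (hk : 1 ≤ k) {i s : ℕ} {K : ℝ × ℝ} (hK : K ∈ Kfam k i) :
    Ur k ch i s K ⊆ ivSet K := by
  refine Set.iUnion₂_subset fun J hJ => ?_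
  obtain ⟨P, hP, rfl, hsub⟩ := lvl_parent hk hK hJ
  exact hsub

lemma wgt_on_Ur (hk : 1 ≤ k) {i s : ℕ} {K : ℝ × ℝ} {x : ℝ} (hK : K ∈ Kfam k i)
    (hx : x ∈ Ur k ch i s K) : wgt k ch x = bk k ^ (i + s + 1) := by
  obtain ⟨J, hJ, hxI⟩ := Set.mem_iUnion₂.mp hx
  obtain ⟨⟨P, hP, rfl⟩, -⟩ := hJ
  exact wgt_eq_val hk hP hxI

lemma three_le_pow {n : ℕ} (h : 1 ≤ n) : (3:ℝ) ≤ 3 ^ n := by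
  calc (3:ℝ) = 3 ^ 1 := (pow_one 3).symm
  _ ≤ 3 ^ n := pow_le_pow_right₀ (by norm_num) h

lemma pow_split (hk : 1 ≤ k) : (3:ℝ) ^ k = 3 ^ (k - 1) * 3 := by
  conv_lhs => rw [show k = (k - 1) + 1 by omega]
  rw [pow_succ]

lemma one_le_pow3 (n : ℕ) : (1:ℝ) ≤ 3 ^ n := one_le_pow₀ (by norm_num)

lemma one_lt_bk (hk : 2 ≤ k) : 1 < bk k := by
  unfold bk
  rw [lt_div_iff₀ (by positivity)]
  have h1 := pow_split (show 1 ≤ k by omega)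
  have h3 := one_le_pow3 (k - 1)
  nlinarith

lemma two_le_bk (hk : 2 ≤ k) : 2 ≤ bk k := by
  unfold bk
  rw [le_div_iff₀ (by positivity)]
  have h1 := pow_split (show 1 ≤ k by omega)
  have h3 : (3:ℝ) ≤ 3 ^ (k - 1) := three_le_pow (by omega)
  nlinarith

lemma bk_le_three (hk : 1 ≤ k) : bk k ≤ 3 := by
  unfold bk
  rw [div_le_iff₀ (by positivity)]
  have h1 := pow_split hk
  have h3 := one_le_pow3 (k - 1)
  nlinarith

lemma bk_pos (hk : 1 ≤ k) : 0 < bk k := by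
  unfold bk; positivity

lemma Ur_disjoint (hk : 2 ≤ k) {i s s' : ℕ} {K : ℝ × ℝ} (hK : K ∈ Kfam k i)
    (hne : s ≠ s') : Ur k ch i s K ∩ Ur k ch i s' K = ∅ := by
  have hk1 : 1 ≤ k := by omega
  apply Set.eq_empty_of_forall_notMem
  rintro x ⟨h1, h2⟩
  have e1 := wgt_on_Ur (ch := ch) hk1 hK h1
  have e2 := wgt_on_Ur (ch := ch) hk1 hK h2
  have hmono : StrictMono (fun n : ℕ => bk k ^ n) := fun a b hab =>
    pow_lt_pow_right₀ (one_lt_bk hk) hab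
  have heq : i + s + 1 = i + s' + 1 := hmono.injective (e1.symm.trans e2)
  omega

end Aux3


section Aux4

variable {k : ℕ} {ch : ℝ × ℝ → Bool}

lemma vol_Ur (hk : 1 ≤ k) (s : ℕ) : ∀ (i : ℕ) (K : ℝ × ℝ), K ∈ Kfam k i →
    volume (Ur k ch i s K) =
      ENNReal.ofReal ((3:ℝ) ^ (-((k:ℤ) * i)) * (3:ℝ) ^ (-(k:ℤ) - (s:ℤ))) := by
  induction s with
  | zero =>
    intro i K hK
    have hlvl : lvl k i 0 K = {mid K} := by
      ext J
      constructor
      · rintro ⟨⟨P, hP, rfl⟩, hJK⟩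
        have hy := mid_mem_self hk hP
        have hPK : P = K :=
          kfam_eq_of_mem hk hP hK (ivSet_mid_subset (kfam_le hk hP) hy) (hJK hy)
        rw [hPK]
        rfl
      · rintro rfl
        exact ⟨⟨K, hK, rfl⟩, ivSet_mid_subset (kfam_le hk hK)⟩
    have hUr : Ur k ch i 0 K = ivSet (IJ k ch (mid K)) := by
      rw [Ur, hlvl, Set.biUnion_singleton]
    rw [hUr, ivSet, Real.volume_Ico]
    congr 1
    have hlen : (IJ k ch (mid K)).2 - (IJ k ch (mid K)).1 = len (IJ k ch (mid K)) := rfl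
    rw [hlen, len_IJ, len_mid, kfam_len hk hK, div_eq_mul_inv, ← zpow_neg_one,
      ← mul_assoc, three_zpow_mul, three_zpow_mul, three_zpow_mul]
    congr 1
    push_cast
    ring
  | succ s ih =>
    intro i K hK
    have hUn : Ur k ch i (s+1) K =
        ⋃ j ∈ Finset.range (3 ^ (k-1)), Ur k ch (i+1) s (chl k K j) := by
      ext x
      constructor
      · intro hx
        obtain ⟨J, hJ, hxI⟩ := Set.mem_iUnion₂.mp hx
        obtain ⟨⟨P, hP, rfl⟩, hJK⟩ := hJ
        have hP' : P ∈ Kfam k ((i+1) + s) := by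
          rw [show (i+1) + s = i + (s+1) by omega]; exact hP
        obtain ⟨A, hA, hPA⟩ := kfam_anc' hk (Nat.le_add_right (i+1) s) hP'
        obtain ⟨Q, hQ, j, hj, rfl⟩ := kfam_succ_iff.mp hA
        have hy := mid_mem_self hk hP'
        have hyQ : (mid P).1 ∈ ivSet Q :=
          ivSet_mid_subset (kfam_le hk hQ)
            (chl_subset_mid hk (kfam_le hk hQ) hj
              (hPA (ivSet_mid_subset (kfam_le hk hP') hy)))
        have hKQ : K = Q := kfam_eq_of_mem hk hK hQ (hJK hy) hyQ
        refine Set.mem_iUnion₂.mpr ⟨j, Finset.mem_range.mpr hj,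
          Set.mem_iUnion₂.mpr ⟨mid P, ⟨⟨P, hP', rfl⟩, ?_⟩, hxI⟩⟩
        rw [hKQ]
        exact (ivSet_mid_subset (kfam_le hk hP')).trans hPA
      · intro hx
        obtain ⟨j, hjm, hx'⟩ := Set.mem_iUnion₂.mp hx
        have hj : j < 3 ^ (k-1) := Finset.mem_range.mp hjm
        obtain ⟨J, hJ, hxI⟩ := Set.mem_iUnion₂.mp hx'
        obtain ⟨⟨P, hP, rfl⟩, hJC⟩ := hJ
        have hP' : P ∈ Kfam k (i + (s+1)) := by
          rw [show i + (s+1) = (i+1) + s by omega]; exact hP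
        refine Set.mem_iUnion₂.mpr ⟨mid P, ⟨⟨P, hP', rfl⟩, ?_⟩, hxI⟩
        exact hJC.trans ((chl_subset_mid hk (kfam_le hk hK) hj).trans
          (ivSet_mid_subset (kfam_le hk hK)))
    have hdisj : Set.PairwiseDisjoint (↑(Finset.range (3 ^ (k-1))))
        (fun j => Ur k ch (i+1) s (chl k K j)) := by
      intro a ha b hb hab
      simp only [Finset.coe_range, Set.mem_Iio] at ha hb
      have hd := chl_disj (k := k) hk (kfam_le hk hK) hab
      refine Set.disjoint_left.mpr fun {x} hxa hxb => ?_
      have h1 := Ur_subset (ch := ch) hk (chl_mem hK ha) hxa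
      have h2 := Ur_subset (ch := ch) hk (chl_mem hK hb) hxb
      exact absurd (Set.mem_inter h1 h2) (hd ▸ Set.notMem_empty x)
    rw [hUn, measure_biUnion_finset hdisj (fun b _ => Ur_measurable _ _ _)]
    have hval : ∀ j ∈ Finset.range (3 ^ (k-1)), volume (Ur k ch (i+1) s (chl k K j)) =
        ENNReal.ofReal ((3:ℝ) ^ (-((k:ℤ) * (i+1))) * (3:ℝ) ^ (-(k:ℤ) - (s:ℤ))) :=
      fun j hj => ih (i+1) (chl k K j) (chl_mem hK (Finset.mem_range.mp hj))
    rw [Finset.sum_congr rfl hval, Finset.sum_const, Finset.card_range, nsmul_eq_mul,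
      ← ENNReal.ofReal_natCast, ← ENNReal.ofReal_mul (by positivity)]
    congr 1
    have hcast : ((3 ^ (k-1) : ℕ) : ℝ) = (3:ℝ) ^ (((k : ℕ) - 1 : ℕ) : ℤ) := by
      push_cast
      rw [zpow_natCast]
    rw [hcast, ← mul_assoc, three_zpow_mul, three_zpow_mul, three_zpow_mul]
    congr 1
    have : (((k:ℕ) - 1 : ℕ) : ℤ) = (k : ℤ) - 1 := by omega
    rw [this]
    push_cast
    ring

end Aux4


section Aux5

open scoped ENNReal

variable {k : ℕ} {ch : ℝ × ℝ → Bool}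

lemma zpow_neg_nat (j : ℕ) : (3:ℝ) ^ (-(j:ℤ)) = ((3:ℝ)⁻¹) ^ j := by
  rw [zpow_neg, zpow_natCast, ← inv_pow]

lemma bk_lt_three (hk : 1 ≤ k) : bk k < 3 := by
  unfold bk
  rw [div_lt_iff₀ (by positivity)]
  have h1 := pow_split hk
  have h3 := one_le_pow3 (k - 1)
  nlinarith

lemma geom_factor (hk : 1 ≤ k) : 1 - bk k / 3 = ((3:ℝ) ^ (k-1) + 1)⁻¹ := by
  unfold bk
  rw [pow_split hk]
  have hy : (0:ℝ) < 3 ^ (k-1) + 1 := by positivity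
  field_simp
  ring

lemma bk_norm (hk : 1 ≤ k) : bk k * (3:ℝ) ^ (-(k:ℤ)) * ((3:ℝ) ^ (k-1) + 1) = 1 := by
  have hzz : (3:ℝ) ^ (k:ℕ) * (3:ℝ) ^ (-(k:ℤ)) = 1 := by
    rw [← zpow_natCast (3:ℝ) k, three_zpow_mul, show (k:ℤ) + -(k:ℤ) = 0 by ring, zpow_zero]
  calc bk k * (3:ℝ) ^ (-(k:ℤ)) * ((3:ℝ) ^ (k-1) + 1)
      = ((3:ℝ) ^ (k:ℕ) * (3:ℝ) ^ (-(k:ℤ))) * (((3:ℝ) ^ (k-1) + 1)⁻¹ * ((3:ℝ) ^ (k-1) + 1)) := by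
        unfold bk; rw [div_eq_mul_inv]; ring
    _ = 1 := by rw [hzz, inv_mul_cancel₀ (by positivity)]; norm_num

lemma mem_Ur_of_pos (hk : 1 ≤ k) {i : ℕ} {K : ℝ × ℝ} {x : ℝ} (hK : K ∈ Kfam k i)
    (hxK : x ∈ ivSet K) (hw : wgt k ch x ≠ 0) : ∃ s, x ∈ Ur k ch i s K := by
  have hnall : ¬(∀ (m : ℕ) (P : ℝ × ℝ), P ∈ Kfam k m → x ∉ ivSet (IJ k ch (mid P))) :=
    fun hall => hw (wgt_eq_zero hall)
  push_neg at hnall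
  obtain ⟨m, P, hP, hxI⟩ := hnall
  obtain ⟨s, hm, hSub, hISub⟩ := mem_deeper hk hK hP hxK hxI
  subst hm
  exact ⟨s, Set.mem_iUnion₂.mpr ⟨mid P, ⟨⟨P, hP, rfl⟩, hSub⟩, hxI⟩⟩

lemma dist_set (hk : 2 ≤ k) {i : ℕ} {K : ℝ × ℝ} (hK : K ∈ Kfam k i) {t : ℝ} (ht : 0 < t)
    (r : ℕ) (h1 : t < bk k ^ (i+r+1)) (h2 : ∀ s, s < r → bk k ^ (i+s+1) ≤ t) :
    {x | x ∈ ivSet K ∧ t < wgt k ch x} = ⋃ j : ℕ, Ur k ch i (r+j) K := by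
  have hk1 : 1 ≤ k := by omega
  ext x
  simp only [Set.mem_setOf_eq, Set.mem_iUnion]
  constructor
  · rintro ⟨hxK, hxw⟩
    obtain ⟨s, hs⟩ := mem_Ur_of_pos hk1 hK hxK (lt_trans ht hxw).ne'
    have hval := wgt_on_Ur (ch := ch) hk1 hK hs
    have hsr : r ≤ s := by
      by_contra hc
      push_neg at hc
      exact absurd hxw (not_lt.mpr (hval ▸ h2 s hc))
    exact ⟨s - r, by rwa [show r + (s-r) = s by omega]⟩
  · rintro ⟨j, hj⟩
    refine ⟨Ur_subset hk1 hK hj, ?_⟩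
    rw [wgt_on_Ur hk1 hK hj]
    calc t < bk k ^ (i+r+1) := h1
    _ ≤ bk k ^ (i+(r+j)+1) := pow_le_pow_right₀ (one_lt_bk hk).le (by omega)

lemma vol_dist (hk : 2 ≤ k) {i : ℕ} {K : ℝ × ℝ} (hK : K ∈ Kfam k i) {t : ℝ} (ht : 0 < t)
    (r : ℕ) (h1 : t < bk k ^ (i+r+1)) (h2 : ∀ s, s < r → bk k ^ (i+s+1) ≤ t) :
    volume {x | x ∈ ivSet K ∧ t < wgt k ch x} =
      ENNReal.ofReal ((3:ℝ) ^ (-((k:ℤ) * i)) * ((3:ℝ) ^ (-(k:ℤ) - (r:ℤ)) * (3/2))) := by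
  have hk1 : 1 ≤ k := by omega
  rw [dist_set hk hK ht r h1 h2]
  rw [measure_iUnion ?_ (fun j => Ur_measurable _ _ _)]
  · have hterm : ∀ j : ℕ, volume (Ur k ch i (r+j) K) =
        ENNReal.ofReal (((3:ℝ) ^ (-((k:ℤ) * i)) * (3:ℝ) ^ (-(k:ℤ) - (r:ℤ))) * ((3:ℝ)⁻¹) ^ j) := by
      intro j
      rw [vol_Ur hk1 (r+j) i K hK]
      congr 1
      rw [← zpow_neg_nat, three_zpow_mul, three_zpow_mul, three_zpow_mul]
      congr 1
      push_cast
      ring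
    rw [tsum_congr hterm,
      ← ENNReal.ofReal_tsum_of_nonneg (fun j => by positivity)
        ((summable_geometric_of_lt_one (by norm_num) (by norm_num)).mul_left _),
      tsum_mul_left, tsum_geometric_of_lt_one (by norm_num) (by norm_num)]
    congr 1
    rw [mul_assoc]
    congr 1
    norm_num
  · intro m n hmn
    have := Ur_disjoint (ch := ch) hk hK (show r + m ≠ r + n by omega)
    exact Set.disjoint_left.mpr fun {x} hx1 hx2 =>
      absurd (Set.mem_inter hx1 hx2) (this ▸ Set.notMem_empty x)

lemma mass_eq (hk : 2 ≤ k) {i : ℕ} {K : ℝ × ℝ} (hK : K ∈ Kfam k i) :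
    mass (wgt k ch) K = (3:ℝ) ^ (-((k:ℤ) * i)) * bk k ^ i := by
  have hk1 : 1 ≤ k := by omega
  have hbk0 : 0 < bk k := bk_pos hk1
  set H : ℝ → ℝ≥0∞ := fun x => ∑' s : ℕ,
    Set.indicator (Ur k ch i s K) (fun _ => ENNReal.ofReal (bk k ^ (i+s+1))) x with hH
  have hmeas : Measurable H := Measurable.ennreal_tsum fun s =>
    measurable_const.indicator (Ur_measurable _ _ _)
  have hsingle : ∀ (x : ℝ) (s : ℕ), x ∈ Ur k ch i s K →
      H x = ENNReal.ofReal (bk k ^ (i+s+1)) := by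
    intro x s hxs
    have hHx : H x = ∑' s' : ℕ,
        Set.indicator (Ur k ch i s' K) (fun _ => ENNReal.ofReal (bk k ^ (i+s'+1))) x := rfl
    rw [hHx, tsum_eq_single s ?_]
    · exact Set.indicator_of_mem hxs _
    · intro s' hs'
      apply Set.indicator_of_notMem
      intro hxs'
      exact absurd (Set.mem_inter hxs' hxs)
        ((Ur_disjoint (ch := ch) hk hK hs') ▸ Set.notMem_empty x)
  have hzero : ∀ x : ℝ, (∀ s : ℕ, x ∉ Ur k ch i s K) → H x = 0 := by
    intro x hx
    have hHx : H x = ∑' s' : ℕ,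
        Set.indicator (Ur k ch i s' K) (fun _ => ENNReal.ofReal (bk k ^ (i+s'+1))) x := rfl
    rw [hHx]
    convert tsum_zero with s
    exact Set.indicator_of_notMem (hx s) _
  have hfin : ∀ x, H x < ⊤ := by
    intro x
    by_cases hx : ∃ s, x ∈ Ur k ch i s K
    · obtain ⟨s, hs⟩ := hx
      rw [hsingle x s hs]
      exact ENNReal.ofReal_lt_top
    · push_neg at hx
      rw [hzero x hx]
      exact ENNReal.zero_lt_top
  have hEq : Set.EqOn (wgt k ch) (fun x => (H x).toReal) (ivSet K) := by
    intro x hxK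
    by_cases hx : ∃ s, x ∈ Ur k ch i s K
    · obtain ⟨s, hs⟩ := hx
      simp only
      rw [hsingle x s hs, ENNReal.toReal_ofReal (by positivity)]
      exact wgt_on_Ur hk1 hK hs
    · push_neg at hx
      simp only
      rw [hzero x hx, ENNReal.toReal_zero]
      by_contra hw
      obtain ⟨s, hs⟩ := mem_Ur_of_pos hk1 hK hxK hw
      exact hx s hs
  have step1 : mass (wgt k ch) K = ∫ x in ivSet K, (H x).toReal :=
    setIntegral_congr_fun measurableSet_Ico hEq
  rw [step1, integral_toReal hmeas.aemeasurable (ae_of_all _ hfin)]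
  have hlin : (∫⁻ x in ivSet K, H x) =
      ∑' s : ℕ, ENNReal.ofReal (bk k ^ (i+s+1)) * volume (Ur k ch i s K) := by
    rw [hH, lintegral_tsum fun s =>
      (measurable_const.indicator (Ur_measurable _ _ _)).aemeasurable]
    congr 1
    funext s
    rw [lintegral_indicator (Ur_measurable _ _ _), setLIntegral_const,
      Measure.restrict_apply (Ur_measurable _ _ _),
      Set.inter_eq_self_of_subset_left (Ur_subset hk1 hK)]
  rw [hlin]
  have hterm : ∀ s : ℕ, ENNReal.ofReal (bk k ^ (i+s+1)) * volume (Ur k ch i s K) =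
      ENNReal.ofReal (((3:ℝ) ^ (-((k:ℤ) * i)) * bk k ^ (i+1) * (3:ℝ) ^ (-(k:ℤ))) *
        (bk k / 3) ^ s) := by
    intro s
    rw [vol_Ur hk1 s i K hK, ← ENNReal.ofReal_mul (by positivity)]
    congr 1
    have e1 : (3:ℝ) ^ (-(k:ℤ) - (s:ℤ)) = (3:ℝ) ^ (-(k:ℤ)) * ((3:ℝ)⁻¹) ^ s := by
      rw [show -(k:ℤ) - (s:ℤ) = -(k:ℤ) + -(s:ℤ) by ring, ← three_zpow_mul]
      congr 1
      exact zpow_neg_nat s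
    rw [e1, div_eq_mul_inv, mul_pow, pow_add, pow_add]
    ring
  have hratio : bk k / 3 < 1 := (div_lt_one (by norm_num)).mpr (bk_lt_three hk1)
  have hratio0 : 0 ≤ bk k / 3 := by positivity
  have hCnn : 0 ≤ (3:ℝ) ^ (-((k:ℤ) * i)) * bk k ^ (i+1) * (3:ℝ) ^ (-(k:ℤ)) :=
    mul_nonneg (mul_nonneg (three_zpow_pos _).le (pow_nonneg hbk0.le _)) (three_zpow_pos _).le
  rw [tsum_congr hterm,
    ← ENNReal.ofReal_tsum_of_nonneg
      (fun s => mul_nonneg hCnn (pow_nonneg (div_nonneg hbk0.le (by norm_num)) s))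
      ((summable_geometric_of_lt_one hratio0 hratio).mul_left _),
    tsum_mul_left, tsum_geometric_of_lt_one hratio0 hratio,
    ENNReal.toReal_ofReal (mul_nonneg hCnn (by rw [geom_factor hk1]; positivity))]
  rw [geom_factor hk1, inv_inv]
  have : (3:ℝ) ^ (-((k:ℤ) * i)) * bk k ^ (i+1) * (3:ℝ) ^ (-(k:ℤ)) * ((3:ℝ) ^ (k-1) + 1) =
      ((3:ℝ) ^ (-((k:ℤ) * i)) * bk k ^ i) * (bk k * (3:ℝ) ^ (-(k:ℤ)) * ((3:ℝ) ^ (k-1) + 1)) := by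
    rw [pow_add]
    ring
  rw [this, bk_norm hk1, mul_one]

end Aux5


section Aux6

open scoped ENNReal

variable {k : ℕ} {ch : ℝ × ℝ → Bool}

/-- The values of the normalized distribution function. -/
def siv (k r : ℕ) : ℝ := (3:ℝ) ^ (-(k:ℤ) - (r:ℤ)) * (3/2)

/-- The level sets of `t`. -/
def Iv (k i : ℕ) : ℕ → Set ℝ
  | 0 => Set.Ioo 0 (bk k ^ (i+1))
  | (r+1) => Set.Ico (bk k ^ (i+r+1)) (bk k ^ (i+r+2))

/-- Lengths of the level sets. -/
def ivlen (k i : ℕ) : ℕ → ℝ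
  | 0 => bk k ^ (i+1)
  | (r+1) => bk k ^ (i+r+2) - bk k ^ (i+r+1)

/-- The terms of the series computing the Lorentz norm. -/
def Wr (k i : ℕ) (r : ℕ) : ℝ := phi0 (siv k r) * ivlen k i r

lemma siv_pos (k r : ℕ) : 0 < siv k r := by unfold siv; positivity

lemma siv_le_one (hk : 1 ≤ k) (r : ℕ) : siv k r ≤ 1 := by
  have h1 : (3:ℝ) ^ (-(k:ℤ) - (r:ℤ)) ≤ (3:ℝ) ^ (-1 : ℤ) :=
    zpow_le_zpow_right₀ (by norm_num) (by omega)
  have h2 : (3:ℝ) ^ (-1 : ℤ) = 1/3 := by norm_num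
  rw [h2] at h1
  unfold siv
  linarith

lemma phi0_nonneg {s : ℝ} (h0 : 0 ≤ s) (h1 : s ≤ 1) : 0 ≤ phi0 s := by
  unfold phi0
  rcases eq_or_lt_of_le h0 with h | h
  · simp [← h]
  · have := Real.log_nonpos h0 h1
    nlinarith

lemma phi0_siv_nonneg (hk : 1 ≤ k) (r : ℕ) : 0 ≤ phi0 (siv k r) :=
  phi0_nonneg (siv_pos k r).le (siv_le_one hk r)

lemma log3_ge_one : (1:ℝ) ≤ Real.log 3 := by
  rw [Real.le_log_iff_exp_le (by norm_num)]
  have h := Real.exp_one_lt_d9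
  linarith

lemma log3_le_two : Real.log 3 ≤ 2 := by
  rw [Real.log_le_iff_le_exp (by norm_num)]
  have := Real.add_one_le_exp (2:ℝ)
  linarith

lemma log32_nonneg : 0 ≤ Real.log (3/2) := Real.log_nonneg (by norm_num)

lemma log32_le_one : Real.log (3/2) ≤ 1 := by
  rw [Real.log_le_iff_le_exp (by norm_num)]
  have := Real.add_one_le_exp (1:ℝ)
  linarith

lemma log_siv (k r : ℕ) :
    Real.log (siv k r) = (-(k:ℝ) - (r:ℝ)) * Real.log 3 + Real.log (3/2) := by
  unfold siv
  rw [Real.log_mul (ne_of_gt (three_zpow_pos _)) (by norm_num), Real.log_zpow]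
  push_cast
  ring

lemma phi0_siv_expand (k r : ℕ) :
    phi0 (siv k r) = siv k r * (1 - Real.log (3/2) + ((k:ℝ) + (r:ℝ)) * Real.log 3) := by
  unfold phi0
  rw [log_siv]
  ring

lemma siv_repr (k r : ℕ) : siv k r = (3/2) * ((3:ℝ) ^ (-(k:ℤ)) * ((3:ℝ)⁻¹) ^ r) := by
  unfold siv
  have e := zpow_neg_nat r
  rw [show -(k:ℤ) - (r:ℤ) = -(k:ℤ) + -(r:ℤ) by ring, ← three_zpow_mul, e]
  ring

lemma pow_shift (hk : 1 ≤ k) (i r : ℕ) :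
    bk k ^ (i+r) * ((3:ℝ)⁻¹) ^ r = bk k ^ i * (bk k / 3) ^ r := by
  rw [pow_add, div_eq_mul_inv, mul_pow]
  ring

/-- Upper comparison series. -/
def uB (k i : ℕ) (r : ℕ) : ℝ :=
  (9/2) * (3:ℝ) ^ (-(k:ℤ)) * bk k ^ i * ((3*(k:ℝ) + 2*(r:ℝ)) * (bk k / 3) ^ r)

/-- Lower comparison series. -/
def gB (k i : ℕ) (r : ℕ) : ℝ :=
  (3/2) * (3:ℝ) ^ (-(k:ℤ)) * bk k ^ i * ((r:ℝ) * (bk k / 3) ^ r)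

lemma ivlen_nonneg (hk : 2 ≤ k) (i : ℕ) : ∀ r, 0 ≤ ivlen k i r := by
  have hbk := one_lt_bk hk
  have hbk0 := bk_pos (show 1 ≤ k by omega)
  intro r
  cases r with
  | zero => exact pow_nonneg hbk0.le _
  | succ r =>
    have : bk k ^ (i+r+1) ≤ bk k ^ (i+r+2) := pow_le_pow_right₀ hbk.le (by omega)
    simp only [ivlen]
    linarith

lemma ivlen_le (hk : 2 ≤ k) (i : ℕ) : ∀ r, ivlen k i r ≤ 3 * bk k ^ (i+r) := by
  have hbk3 := bk_le_three (show 1 ≤ k by omega)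
  have hbk0 := bk_pos (show 1 ≤ k by omega)
  intro r
  cases r with
  | zero =>
    simp only [ivlen]
    rw [pow_succ, Nat.add_zero]
    nlinarith [mul_nonneg (sub_nonneg.mpr hbk3) (pow_nonneg hbk0.le i)]
  | succ r =>
    simp only [ivlen]
    have e1 : bk k ^ (i+r+2) = bk k ^ (i+r+1) * bk k := pow_succ _ _
    have h0 : (0:ℝ) ≤ bk k ^ (i+r+1) := pow_nonneg hbk0.le _
    rw [show i + (r+1) = i+r+1 by omega]
    nlinarith

lemma ivlen_ge (hk : 2 ≤ k) (i r : ℕ) : bk k ^ (i+r+1) ≤ ivlen k i (r+1) := by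
  have hbk2 := two_le_bk hk
  have h0 : (0:ℝ) ≤ bk k ^ (i+r+1) := pow_nonneg (bk_pos (by omega)).le _
  simp only [ivlen]
  have e1 : bk k ^ (i+r+2) = bk k ^ (i+r+1) * bk k := pow_succ _ _
  nlinarith

lemma Wr_nonneg (hk : 2 ≤ k) (i r : ℕ) : 0 ≤ Wr k i r :=
  mul_nonneg (phi0_siv_nonneg (by omega) r) (ivlen_nonneg hk i r)

lemma cR_le (hk : 1 ≤ k) (r : ℕ) :
    1 - Real.log (3/2) + ((k:ℝ) + (r:ℝ)) * Real.log 3 ≤ 3*(k:ℝ) + 2*(r:ℝ) := by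
  have h1 := log3_le_two
  have h2 := log32_nonneg
  have h3 : (1:ℝ) ≤ (k:ℝ) := by exact_mod_cast hk
  have h4 : (0:ℝ) ≤ (r:ℝ) := Nat.cast_nonneg r
  have h5 := log3_ge_one
  nlinarith

lemma cR_ge (r k' : ℕ) :
    (r:ℝ) ≤ 1 - Real.log (3/2) + ((k':ℝ) + (r:ℝ)) * Real.log 3 := by
  have h1 := log3_ge_one
  have h2 := log32_le_one
  have h3 : (0:ℝ) ≤ (k':ℝ) := Nat.cast_nonneg k'
  have h4 : (0:ℝ) ≤ (r:ℝ) := Nat.cast_nonneg r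
  nlinarith

lemma Wr_le_uB (hk : 2 ≤ k) (i r : ℕ) : Wr k i r ≤ uB k i r := by
  have hk1 : 1 ≤ k := by omega
  have hsnn := (siv_pos k r).le
  have h1 : phi0 (siv k r) ≤ siv k r * (3*(k:ℝ) + 2*(r:ℝ)) := by
    rw [phi0_siv_expand]
    exact mul_le_mul_of_nonneg_left (cR_le hk1 r) hsnn
  have h2 := ivlen_le hk i r
  have h3 := ivlen_nonneg hk i r
  have h4 : (0:ℝ) ≤ siv k r * (3*(k:ℝ) + 2*(r:ℝ)) := by
    apply mul_nonneg hsnn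
    have : (0:ℝ) ≤ (k:ℝ) := Nat.cast_nonneg k
    have : (0:ℝ) ≤ (r:ℝ) := Nat.cast_nonneg r
    positivity
  calc Wr k i r = phi0 (siv k r) * ivlen k i r := rfl
  _ ≤ (siv k r * (3*(k:ℝ) + 2*(r:ℝ))) * (3 * bk k ^ (i+r)) :=
      mul_le_mul h1 h2 h3 h4
  _ = uB k i r := by
      unfold uB
      rw [siv_repr]
      have e2 := pow_shift hk1 i r
      linear_combination ((9/2) * (3:ℝ) ^ (-(k:ℤ)) * (3*(k:ℝ) + 2*(r:ℝ))) * e2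

lemma gB_le_Wr (hk : 2 ≤ k) (i r : ℕ) : gB k i r ≤ Wr k i r := by
  have hk1 : 1 ≤ k := by omega
  cases r with
  | zero =>
    have := Wr_nonneg hk i 0
    unfold gB
    simpa using this
  | succ r =>
    have hsnn := (siv_pos k (r+1)).le
    have h1 : siv k (r+1) * ((r:ℝ)+1) ≤ phi0 (siv k (r+1)) := by
      rw [phi0_siv_expand]
      have hc := cR_ge (r+1) k
      have hcast : ((r+1:ℕ):ℝ) = (r:ℝ)+1 := by push_cast; ring
      rw [hcast] at hc
      rw [hcast]
      exact mul_le_mul_of_nonneg_left hc hsnn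
    have h2 := ivlen_ge hk i r
    have hpow : (0:ℝ) ≤ bk k ^ (i+r+1) := pow_nonneg (bk_pos hk1).le _
    have hphinn := phi0_siv_nonneg hk1 (r+1)
    calc gB k i (r+1) = (siv k (r+1) * ((r:ℝ)+1)) * bk k ^ (i+r+1) := by
          unfold gB
          rw [siv_repr]
          have e2 := pow_shift hk1 i (r+1)
          rw [show i + (r+1) = i+r+1 by omega] at e2
          push_cast
          linear_combination ((3/2) * ((r:ℝ)+1)) * e2
    _ ≤ phi0 (siv k (r+1)) * ivlen k i (r+1) :=
        mul_le_mul h1 h2 hpow hphinn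
    _ = Wr k i (r+1) := rfl

lemma lam_nonneg (hk : 1 ≤ k) : 0 ≤ bk k / 3 := by
  have := bk_pos hk
  positivity

lemma lam_lt_one (hk : 1 ≤ k) : bk k / 3 < 1 :=
  (div_lt_one (by norm_num)).mpr (bk_lt_three hk)

lemma summable_geom_lam (hk : 1 ≤ k) : Summable (fun r : ℕ => (bk k / 3) ^ r) :=
  summable_geometric_of_lt_one (lam_nonneg hk) (lam_lt_one hk)

lemma summable_rgeom_lam (hk : 1 ≤ k) : Summable (fun r : ℕ => (r:ℝ) * (bk k / 3) ^ r) := by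
  have hnorm : ‖bk k / 3‖ < 1 := by
    rw [Real.norm_eq_abs, abs_of_nonneg (lam_nonneg hk)]
    exact lam_lt_one hk
  exact (summable_pow_mul_geometric_of_norm_lt_one 1 hnorm).congr fun n => by rw [pow_one]

lemma summable_uB (hk : 2 ≤ k) (i : ℕ) : Summable (uB k i) := by
  have hk1 : 1 ≤ k := by omega
  have h1 := (summable_geom_lam hk1).mul_left
    ((9/2) * (3:ℝ) ^ (-(k:ℤ)) * bk k ^ i * (3*(k:ℝ)))
  have h2 := (summable_rgeom_lam hk1).mul_left
    ((9/2) * (3:ℝ) ^ (-(k:ℤ)) * bk k ^ i * 2)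
  exact (h1.add h2).congr fun r => by unfold uB; ring

lemma summable_gB (hk : 2 ≤ k) (i : ℕ) : Summable (gB k i) := by
  have hk1 : 1 ≤ k := by omega
  exact ((summable_rgeom_lam hk1).mul_left
    ((3/2) * (3:ℝ) ^ (-(k:ℤ)) * bk k ^ i)).congr fun r => by unfold gB; ring

lemma summable_Wr (hk : 2 ≤ k) (i : ℕ) : Summable (Wr k i) :=
  Summable.of_nonneg_of_le (Wr_nonneg hk i) (Wr_le_uB hk i) (summable_uB hk i)

lemma tsum_uB (hk : 2 ≤ k) (i : ℕ) :
    ∑' r, uB k i r = (9/2) * (3:ℝ) ^ (-(k:ℤ)) * bk k ^ i *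
      (3*(k:ℝ) * (1 - bk k / 3)⁻¹ + 2 * ((bk k / 3) / (1 - bk k / 3) ^ 2)) := by
  have hk1 : 1 ≤ k := by omega
  have hnorm : ‖bk k / 3‖ < 1 := by
    rw [Real.norm_eq_abs, abs_of_nonneg (lam_nonneg hk1)]
    exact lam_lt_one hk1
  have h1 := (summable_geom_lam hk1).mul_left
    ((9/2) * (3:ℝ) ^ (-(k:ℤ)) * bk k ^ i * (3*(k:ℝ)))
  have h2 := (summable_rgeom_lam hk1).mul_left
    ((9/2) * (3:ℝ) ^ (-(k:ℤ)) * bk k ^ i * 2)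
  have hsplit : ∀ r : ℕ, uB k i r =
      ((9/2) * (3:ℝ) ^ (-(k:ℤ)) * bk k ^ i * (3*(k:ℝ))) * (bk k / 3) ^ r +
      ((9/2) * (3:ℝ) ^ (-(k:ℤ)) * bk k ^ i * 2) * ((r:ℝ) * (bk k / 3) ^ r) := by
    intro r; unfold uB; ring
  rw [tsum_congr hsplit, Summable.tsum_add h1 h2, tsum_mul_left, tsum_mul_left,
    tsum_geometric_of_lt_one (lam_nonneg hk1) (lam_lt_one hk1),
    tsum_coe_mul_geometric_of_norm_lt_one hnorm]
  ring

lemma tsum_gB (hk : 2 ≤ k) (i : ℕ) :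
    ∑' r, gB k i r = (3/2) * (3:ℝ) ^ (-(k:ℤ)) * bk k ^ i *
      ((bk k / 3) / (1 - bk k / 3) ^ 2) := by
  have hk1 : 1 ≤ k := by omega
  have hnorm : ‖bk k / 3‖ < 1 := by
    rw [Real.norm_eq_abs, abs_of_nonneg (lam_nonneg hk1)]
    exact lam_lt_one hk1
  have hsplit : ∀ r : ℕ, gB k i r =
      ((3/2) * (3:ℝ) ^ (-(k:ℤ)) * bk k ^ i) * ((r:ℝ) * (bk k / 3) ^ r) := by
    intro r; unfold gB; ring
  rw [tsum_congr hsplit, tsum_mul_left, tsum_coe_mul_geometric_of_norm_lt_one hnorm]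

end Aux6


section Aux7

open scoped ENNReal

variable {k : ℕ} {ch : ℝ × ℝ → Bool}

lemma Iv_measurable (k i r : ℕ) : MeasurableSet (Iv k i r) := by
  cases r with
  | zero => exact measurableSet_Ioo
  | succ r => exact measurableSet_Ico

lemma Iv_pos (hk : 2 ≤ k) {i r : ℕ} {t : ℝ} (h : t ∈ Iv k i r) : 0 < t := by
  cases r with
  | zero => exact h.1
  | succ r => exact lt_of_lt_of_le (pow_pos (bk_pos (by omega)) _) h.1

lemma Iv_lt {i r : ℕ} {t : ℝ} (h : t ∈ Iv k i r) : t < bk k ^ (i+r+1) := by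
  cases r with
  | zero => exact h.2
  | succ r => exact h.2

lemma Iv_lb (hk : 2 ≤ k) {i r : ℕ} {t : ℝ} (h : t ∈ Iv k i r) :
    ∀ s, s < r → bk k ^ (i+s+1) ≤ t := by
  intro s hs
  obtain ⟨r', rfl⟩ : ∃ r', r = r'+1 := ⟨r-1, by omega⟩
  exact le_trans (pow_le_pow_right₀ (one_lt_bk hk).le (by omega)) h.1

lemma Iv_unique (hk : 2 ≤ k) {i r r' : ℕ} {t : ℝ} (hne : r' ≠ r) (h : t ∈ Iv k i r) :
    t ∉ Iv k i r' := by
  intro h'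
  rcases Nat.lt_or_ge r r' with hlt | hge
  · exact absurd (Iv_lt h) (not_lt.mpr (Iv_lb hk h' r hlt))
  · have hlt : r' < r := by omega
    exact absurd (Iv_lt h') (not_lt.mpr (Iv_lb hk h r' hlt))

lemma exists_Iv (hk : 2 ≤ k) (i : ℕ) {t : ℝ} (ht : 0 < t) : ∃ r, t ∈ Iv k i r := by
  have hbk := one_lt_bk hk
  obtain ⟨N, hN⟩ := pow_unbounded_of_one_lt t hbk
  have hex : ∃ n, t < bk k ^ (i+n+1) :=
    ⟨N, hN.trans_le (pow_le_pow_right₀ hbk.le (by omega))⟩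
  classical
  rcases Nat.eq_zero_or_pos (Nat.find hex) with h0 | hpos
  · refine ⟨0, ht, ?_⟩
    have := Nat.find_spec hex
    rwa [h0] at this
  · obtain ⟨r, hr⟩ : ∃ r, Nat.find hex = r+1 := ⟨Nat.find hex - 1, by omega⟩
    have hspec := Nat.find_spec hex
    rw [hr] at hspec
    have hmin := Nat.find_min hex (show r < Nat.find hex by omega)
    push_neg at hmin
    exact ⟨r+1, hmin, hspec⟩

lemma vol_Iv (hk : 2 ≤ k) (i r : ℕ) : volume (Iv k i r) = ENNReal.ofReal (ivlen k i r) := by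
  cases r with
  | zero =>
    show volume (Set.Ioo 0 (bk k ^ (i+1))) = _
    rw [Real.volume_Ioo]
    simp [ivlen]
  | succ r =>
    show volume (Set.Ico (bk k ^ (i+r+1)) (bk k ^ (i+r+2))) = _
    rw [Real.volume_Ico]
    rfl

lemma Iv_subset_Ioi (hk : 2 ≤ k) (i r : ℕ) : Iv k i r ⊆ Set.Ioi 0 :=
  fun _ h => Iv_pos hk h

lemma lorentz_eq (hk : 2 ≤ k) {i : ℕ} {K : ℝ × ℝ} (hK : K ∈ Kfam k i) :
    lorentz phi0 (wgt k ch) K = ∑' r, Wr k i r := by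
  have hk1 : 1 ≤ k := by omega
  set HG : ℝ → ℝ≥0∞ := fun t => ∑' r : ℕ,
    Set.indicator (Iv k i r) (fun _ => ENNReal.ofReal (phi0 (siv k r))) t with hHG
  have hmeas : Measurable HG := Measurable.ennreal_tsum fun r =>
    measurable_const.indicator (Iv_measurable k i r)
  have hsingle : ∀ (t : ℝ) (r : ℕ), t ∈ Iv k i r →
      HG t = ENNReal.ofReal (phi0 (siv k r)) := by
    intro t r ht
    have hHGx : HG t = ∑' r' : ℕ,
        Set.indicator (Iv k i r') (fun _ => ENNReal.ofReal (phi0 (siv k r'))) t := rfl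
    rw [hHGx, tsum_eq_single r ?_]
    · exact Set.indicator_of_mem ht _
    · intro r' hr'
      exact Set.indicator_of_notMem (Iv_unique hk hr' ht) _
  have hzero : ∀ t : ℝ, (∀ r : ℕ, t ∉ Iv k i r) → HG t = 0 := by
    intro t ht
    have hHGx : HG t = ∑' r' : ℕ,
        Set.indicator (Iv k i r') (fun _ => ENNReal.ofReal (phi0 (siv k r'))) t := rfl
    rw [hHGx]
    convert tsum_zero with r
    exact Set.indicator_of_notMem (ht r) _
  have hfin : ∀ t, HG t < ⊤ := by
    intro t
    by_cases ht : ∃ r, t ∈ Iv k i r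
    · obtain ⟨r, hr⟩ := ht
      rw [hsingle t r hr]
      exact ENNReal.ofReal_lt_top
    · push_neg at ht
      rw [hzero t ht]
      exact ENNReal.zero_lt_top
  -- the integrand of the Lorentz norm
  have hFval : ∀ (r : ℕ) (t : ℝ), t ∈ Iv k i r →
      phi0 ((volume {x | x ∈ ivSet K ∧ t < wgt k ch x}).toReal / len K) = phi0 (siv k r) := by
    intro r t ht
    rw [vol_dist hk hK (Iv_pos hk ht) r (Iv_lt ht) (Iv_lb hk ht),
      ENNReal.toReal_ofReal (by positivity), kfam_len hk1 hK, mul_comm, mul_div_assoc,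
      div_self (ne_of_gt (three_zpow_pos _)), mul_one]
    rfl
  have hEq : Set.EqOn (fun t => phi0 ((volume {x | x ∈ ivSet K ∧ t < wgt k ch x}).toReal / len K))
      (fun t => (HG t).toReal) (Set.Ioi (0:ℝ)) := by
    intro t ht
    obtain ⟨r, hr⟩ := exists_Iv hk i ht
    simp only
    rw [hFval r t hr, hsingle t r hr, ENNReal.toReal_ofReal (phi0_siv_nonneg hk1 r)]
  have step1 : lorentz phi0 (wgt k ch) K = ∫ t in Set.Ioi (0:ℝ), (HG t).toReal :=
    setIntegral_congr_fun measurableSet_Ioi hEq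
  rw [step1, integral_toReal hmeas.aemeasurable (ae_of_all _ hfin)]
  have hlin : (∫⁻ t in Set.Ioi (0:ℝ), HG t) =
      ∑' r : ℕ, ENNReal.ofReal (phi0 (siv k r)) * volume (Iv k i r) := by
    rw [hHG, lintegral_tsum fun r =>
      (measurable_const.indicator (Iv_measurable k i r)).aemeasurable]
    congr 1
    funext r
    rw [lintegral_indicator (Iv_measurable k i r), setLIntegral_const,
      Measure.restrict_apply (Iv_measurable k i r),
      Set.inter_eq_self_of_subset_left (Iv_subset_Ioi hk i r)]
  rw [hlin]
  have hterm : ∀ r : ℕ, ENNReal.ofReal (phi0 (siv k r)) * volume (Iv k i r) =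
      ENNReal.ofReal (Wr k i r) := by
    intro r
    rw [vol_Iv hk i r, ← ENNReal.ofReal_mul (phi0_siv_nonneg hk1 r)]
    rfl
  rw [tsum_congr hterm, ← ENNReal.ofReal_tsum_of_nonneg (Wr_nonneg hk i) (summable_Wr hk i),
    ENNReal.toReal_ofReal (tsum_nonneg (Wr_nonneg hk i))]

end Aux7


section Aux8

variable {k : ℕ} {ch : ℝ × ℝ → Bool}

lemma pow3_cancel (k : ℕ) : (3:ℝ) ^ (k:ℕ) * (3:ℝ) ^ (-(k:ℤ)) = 1 := by
  rw [← zpow_natCast (3:ℝ) k, three_zpow_mul, show (k:ℤ) + -(k:ℤ) = 0 by ring, zpow_zero]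

lemma zY (hk : 1 ≤ k) : (3:ℝ) ^ (-(k:ℤ)) * (3:ℝ) ^ (k-1) = 1/3 := by
  have h1 := pow_split hk
  have h2 := pow3_cancel k
  linear_combination (-(3:ℝ) ^ (-(k:ℤ))/3) * h1 + (1/3) * h2

lemma zsq (hk : 1 ≤ k) :
    (3:ℝ) ^ (-(k:ℤ)) * ((3:ℝ) ^ (k-1))^2 = (3:ℝ) ^ (k:ℕ) / 9 := by
  have h1 := pow_split hk
  have h2 := pow3_cancel k
  linear_combination
    (-((3:ℝ) ^ (-(k:ℤ)) * ((3:ℝ) ^ (k-1) + (3:ℝ) ^ (k:ℕ)/3))/3) * h1 +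
    ((3:ℝ) ^ (k:ℕ)/9) * h2

lemma nat_ninek : ∀ n : ℕ, 5 ≤ n → 9*n ≤ 3^n := by
  intro n hn
  induction n, hn using Nat.le_induction with
  | base => norm_num
  | succ m hm ih =>
    have h9 : 9 ≤ 3^m := by
      calc 9 = 3^2 := by norm_num
      _ ≤ 3^m := Nat.pow_le_pow_right (by norm_num) (by omega)
    have h3 : 3^(m+1) = 3*3^m := by rw [pow_succ]; ring
    omega

lemma ninek_real (hk : 3000 < k) : 9*(k:ℝ) ≤ (3:ℝ) ^ (k:ℕ) := by
  have := nat_ninek k (by omega)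
  exact_mod_cast this

lemma lam_ge_half (hk : 2 ≤ k) : (1:ℝ)/2 ≤ bk k / 3 := by
  have := two_le_bk hk
  linarith

lemma lam_le_one (hk : 1 ≤ k) : bk k / 3 ≤ 1 := by
  have := bk_le_three hk
  linarith

lemma inv_one_sub_lam (hk : 1 ≤ k) : (1 - bk k / 3)⁻¹ = (3:ℝ) ^ (k-1) + 1 := by
  rw [geom_factor hk, inv_inv]

lemma lam_div_sq (hk : 1 ≤ k) :
    (bk k / 3) / (1 - bk k / 3)^2 = (bk k / 3) * ((3:ℝ) ^ (k-1) + 1)^2 := by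
  rw [div_eq_mul_inv, ← inv_pow, inv_one_sub_lam hk]

lemma V_lower (hk : 3000 < k) (i : ℕ) :
    (1/12) * ((3:ℝ) ^ (k:ℕ) * bk k ^ i) ≤ ∑' r, Wr k i r := by
  have hk2 : 2 ≤ k := by omega
  have hk1 : 1 ≤ k := by omega
  have hle := Summable.tsum_le_tsum (gB_le_Wr hk2 i) (summable_gB hk2 i) (summable_Wr hk2 i)
  rw [tsum_gB hk2 i, lam_div_sq hk1] at hle
  refine le_trans ?_ hle
  have hy1 : (1:ℝ) ≤ (3:ℝ) ^ (k-1) := one_le_pow3 _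
  have hl := lam_ge_half hk2
  have hz := zsq hk1
  have hpow : (0:ℝ) ≤ bk k ^ i := pow_nonneg (bk_pos hk1).le _
  have core : (1/12) * (3:ℝ) ^ (k:ℕ) ≤
      (3/2) * (3:ℝ) ^ (-(k:ℤ)) * ((bk k / 3) * ((3:ℝ) ^ (k-1) + 1)^2) := by
    have h4 : (1/2) * ((3:ℝ) ^ (k-1))^2 ≤ (bk k / 3) * ((3:ℝ) ^ (k-1) + 1)^2 := by
      nlinarith [sq_nonneg ((3:ℝ) ^ (k-1) + 1), sq_nonneg ((3:ℝ) ^ (k-1))]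
    have h5 : (1/12) * (3:ℝ) ^ (k:ℕ) =
        (3/2) * (3:ℝ) ^ (-(k:ℤ)) * ((1/2) * ((3:ℝ) ^ (k-1))^2) := by
      linear_combination (-3/4) * hz
    rw [h5]
    exact mul_le_mul_of_nonneg_left h4 (by positivity)
  calc (1/12) * ((3:ℝ) ^ (k:ℕ) * bk k ^ i)
      = ((1/12) * (3:ℝ) ^ (k:ℕ)) * bk k ^ i := by ring
  _ ≤ ((3/2) * (3:ℝ) ^ (-(k:ℤ)) * ((bk k / 3) * ((3:ℝ) ^ (k-1) + 1)^2)) * bk k ^ i :=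
      mul_le_mul_of_nonneg_right core hpow
  _ = (3/2) * (3:ℝ) ^ (-(k:ℤ)) * bk k ^ i * ((bk k / 3) * ((3:ℝ) ^ (k-1) + 1)^2) := by
      ring

lemma V_upper (hk : 3000 < k) (i : ℕ) :
    ∑' r, Wr k i r ≤ 5 * ((3:ℝ) ^ (k:ℕ) * bk k ^ i) := by
  have hk2 : 2 ≤ k := by omega
  have hk1 : 1 ≤ k := by omega
  have hle := Summable.tsum_le_tsum (Wr_le_uB hk2 i) (summable_Wr hk2 i) (summable_uB hk2 i)
  rw [tsum_uB hk2 i, lam_div_sq hk1, inv_one_sub_lam hk1] at hle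
  refine le_trans hle ?_
  have hy1 : (1:ℝ) ≤ (3:ℝ) ^ (k-1) := one_le_pow3 _
  have hl1 := lam_le_one hk1
  have hl0 := lam_nonneg hk1
  have hzy := zY hk1
  have hz := zsq hk1
  have h9k := ninek_real hk
  have hkr : (1:ℝ) ≤ (k:ℝ) := by exact_mod_cast hk1
  have hpow : (0:ℝ) ≤ bk k ^ i := pow_nonneg (bk_pos hk1).le _
  have core : (9/2) * (3:ℝ) ^ (-(k:ℤ)) *
      (3*(k:ℝ) * ((3:ℝ) ^ (k-1) + 1) + 2 * ((bk k / 3) * ((3:ℝ) ^ (k-1) + 1)^2)) ≤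
      5 * (3:ℝ) ^ (k:ℕ) := by
    have h5 : 3*(k:ℝ) * ((3:ℝ) ^ (k-1) + 1) ≤ 6*(k:ℝ)*(3:ℝ) ^ (k-1) := by nlinarith
    have h6 : 2 * ((bk k / 3) * ((3:ℝ) ^ (k-1) + 1)^2) ≤ 8 * ((3:ℝ) ^ (k-1))^2 := by
      nlinarith [sq_nonneg ((3:ℝ) ^ (k-1) + 1), sq_nonneg ((3:ℝ) ^ (k-1) - 1)]
    have h7 : (9/2) * (3:ℝ) ^ (-(k:ℤ)) *
        (3*(k:ℝ) * ((3:ℝ) ^ (k-1) + 1) + 2 * ((bk k / 3) * ((3:ℝ) ^ (k-1) + 1)^2)) ≤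
        (9/2) * (3:ℝ) ^ (-(k:ℤ)) * (6*(k:ℝ)*(3:ℝ) ^ (k-1) + 8 * ((3:ℝ) ^ (k-1))^2) :=
      mul_le_mul_of_nonneg_left (add_le_add h5 h6) (by positivity)
    have h8 : (9/2) * (3:ℝ) ^ (-(k:ℤ)) * (6*(k:ℝ)*(3:ℝ) ^ (k-1) + 8 * ((3:ℝ) ^ (k-1))^2) =
        27*(k:ℝ) * ((3:ℝ) ^ (-(k:ℤ)) * (3:ℝ) ^ (k-1)) +
        36 * ((3:ℝ) ^ (-(k:ℤ)) * ((3:ℝ) ^ (k-1))^2) := by ring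
    rw [h8, hzy, hz] at h7
    refine h7.trans ?_
    linarith
  calc (9/2) * (3:ℝ) ^ (-(k:ℤ)) * bk k ^ i *
      (3*(k:ℝ) * ((3:ℝ) ^ (k-1) + 1) + 2 * ((bk k / 3) * ((3:ℝ) ^ (k-1) + 1)^2))
      = ((9/2) * (3:ℝ) ^ (-(k:ℤ)) *
        (3*(k:ℝ) * ((3:ℝ) ^ (k-1) + 1) + 2 * ((bk k / 3) * ((3:ℝ) ^ (k-1) + 1)^2))) *
          bk k ^ i := by ring
  _ ≤ (5 * (3:ℝ) ^ (k:ℕ)) * bk k ^ i := mul_le_mul_of_nonneg_right core hpow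
  _ = 5 * ((3:ℝ) ^ (k:ℕ) * bk k ^ i) := by ring

lemma avg_eq (hk : 2 ≤ k) {i : ℕ} {K : ℝ × ℝ} (hK : K ∈ Kfam k i) :
    avg (wgt k ch) K = bk k ^ i := by
  have hk1 : 1 ≤ k := by omega
  unfold avg
  rw [mass_eq hk hK, kfam_len hk1 hK, mul_comm, mul_div_assoc,
    div_self (ne_of_gt (three_zpow_pos _)), mul_one]

end Aux8

/-- Lemma 5.5 of the paper: `‖w_k‖*_K ∼ 3^k·⟨w_k⟩_K` for all `K ∈ 𝐊`, with absolute implied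
constants independent of `k` and of the choices of the intervals `I(J)`. -/
theorem statement14 :
    ∃ c C : ℝ, 0 < c ∧ c ≤ C ∧ ∀ k : ℕ, 3000 < k → ∀ ch : ℝ × ℝ → Bool, ∀ K ∈ KK k,
      c * ((3 : ℝ) ^ k * avg (wgt k ch) K) ≤ lorentz phi0 (wgt k ch) K ∧
      lorentz phi0 (wgt k ch) K ≤ C * ((3 : ℝ) ^ k * avg (wgt k ch) K) := by
  refine ⟨1/12, 5, by norm_num, by norm_num, ?_⟩
  intro k hk3 ch K hK
  have hk2 : 2 ≤ k := by omega
  obtain ⟨i, hKi⟩ : ∃ i, K ∈ Kfam k i := by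
    rcases Set.mem_iUnion.mp hK with ⟨i, hi⟩
    exact ⟨i, hi⟩
  rw [lorentz_eq hk2 hKi, avg_eq hk2 hKi]
  exact ⟨V_lower hk3 i, V_upper hk3 i⟩

end RTpaper
end
end

section
/- Let c > 1 and let Φ:[0,∞)→[0,∞) be a function with Φ(t) > 0 for t > 0, such that the function t ↦ Φ(t)/t is increasing on (0,∞) and A := ∫_c^∞ ds/Φ(s) is finite. Then Φ(t) ≥ t·log t/(2A) for every t ≥ c². -/
open MeasureTheory Set

/-- Estimate (5.1) of the paper (after Treil–Volberg): if `c > 1`, `Φ : [0,∞) → [0,∞)` is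
positive on `(0,∞)`, `t ↦ Φ(t)/t` is increasing on `(0,∞)` and `A := ∫_c^∞ ds/Φ(s) < ∞`,
then `Φ(t) ≥ t·log t/(2A)` for every `t ≥ c²`. -/
theorem statement18 (c : ℝ) (hc : 1 < c) (Φ : ℝ → ℝ)
    (hnonneg : ∀ t, 0 ≤ t → 0 ≤ Φ t) (hpos : ∀ t, 0 < t → 0 < Φ t)
    (hmono : MonotoneOn (fun t => Φ t / t) (Set.Ioi (0 : ℝ)))
    (hint : IntegrableOn (fun s => 1 / Φ s) (Set.Ioi c)) :
    ∀ t, c ^ 2 ≤ t → t * Real.log t / (2 * ∫ s in Set.Ioi c, 1 / Φ s) ≤ Φ t := by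
  intro t ht
  have hc0 : (0:ℝ) < c := lt_trans one_pos hc
  have ht1 : 1 < t := lt_of_lt_of_le (one_lt_pow₀ hc (by norm_num)) ht
  have ht0 : (0:ℝ) < t := lt_trans one_pos ht1
  set r := Real.sqrt t with hr
  have hrc : c ≤ r := by
    have : Real.sqrt (c ^ 2) ≤ r := Real.sqrt_le_sqrt ht
    rwa [Real.sqrt_sq hc0.le] at this
  have hr0 : (0:ℝ) < r := lt_of_lt_of_le hc0 hrc
  have hrt : r < t := by
    have : r < r * r := by nlinarith [lt_of_lt_of_le hc hrc]
    rwa [Real.mul_self_sqrt ht0.le] at this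
  have hΦt : 0 < Φ t := hpos t ht0
  have hsub : Ioc r t ⊆ Ioi c := fun s hs => lt_of_le_of_lt hrc hs.1
  -- pointwise bound on Ioc r t
  have hpt : ∀ s ∈ Ioc r t, t / Φ t * s⁻¹ ≤ 1 / Φ s := by
    intro s hs
    have hs0 : (0:ℝ) < s := lt_trans hr0 hs.1
    have hΦs : 0 < Φ s := hpos s hs0
    have hm := hmono (mem_Ioi.mpr hs0) (mem_Ioi.mpr ht0) hs.2
    simp only at hm
    rw [div_le_div_iff₀ hs0 ht0] at hm
    rw [show t / Φ t * s⁻¹ = t / (Φ t * s) by ring,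
      div_le_div_iff₀ (by positivity) hΦs]
    nlinarith
  -- integrability of the lower bound
  have hcont : ContinuousOn (fun s : ℝ => t / Φ t * s⁻¹) (Icc r t) := by
    apply ContinuousOn.mul continuousOn_const
    exact ContinuousOn.inv₀ continuousOn_id (fun s hs => ne_of_gt (lt_of_lt_of_le hr0 hs.1))
  have hintL : IntegrableOn (fun s : ℝ => t / Φ t * s⁻¹) (Ioc r t) :=
    (hcont.integrableOn_Icc).mono_set Ioc_subset_Icc_self
  have hintR : IntegrableOn (fun s => 1 / Φ s) (Ioc r t) := hint.mono_set hsub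
  have h2 : ∫ s in Ioc r t, t / Φ t * s⁻¹ ≤ ∫ s in Ioc r t, 1 / Φ s := by
    apply setIntegral_mono_on hintL hintR measurableSet_Ioc hpt
  have h1 : ∫ s in Ioc r t, 1 / Φ s ≤ ∫ s in Ioi c, 1 / Φ s := by
    apply setIntegral_mono_set hint
    · filter_upwards [ae_restrict_mem measurableSet_Ioi] with s hs
      exact one_div_nonneg.mpr (hpos s (lt_trans hc0 hs)).le
    · exact HasSubset.Subset.eventuallyLE hsub
  -- compute the left integral
  have hcalc : ∫ s in Ioc r t, t / Φ t * s⁻¹ = t / Φ t * (Real.log t / 2) := by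
    rw [← intervalIntegral.integral_of_le hrt.le, intervalIntegral.integral_const_mul,
      integral_inv_of_pos hr0 ht0, Real.log_div (ne_of_gt ht0) (ne_of_gt hr0),
      hr, Real.log_sqrt ht0.le]
    ring
  set A := ∫ s in Ioi c, 1 / Φ s with hA
  have hkey : t / Φ t * (Real.log t / 2) ≤ A := by
    rw [← hcalc]; exact le_trans h2 h1
  have hlog : 0 < Real.log t := Real.log_pos ht1
  have hApos : 0 < A := lt_of_lt_of_le (by positivity) hkey
  rw [div_le_iff₀ (by positivity)]
  rw [div_mul_eq_mul_div] at hkey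
  have := (div_le_iff₀ hΦt).mp hkey
  nlinarith
end

section
/- Fix r ∈ (1,∞) and let Φ:[0,∞)→[0,∞) be Φ(t) := t·log(e+t)·(log(log(e^e+t)))^r. Then Φ is strictly increasing and surjective onto [0,∞), and, denoting by Φ^{-1} its inverse, there exist constants 0 < c(r) ≤ C(r), depending only on r, such that for all s ∈ (0,1]: c(r)·s(12 − log s)(log(12 − log s))^r ≤ 1/Φ^{-1}(1/s) ≤ C(r)·s(12 − log s)(log(12 − log s))^r. -/
/-!
Write `ℓ = log(e + t)` and `m = log log(e^e + t)`, so that `Φ(t) = t ℓ m^r` with `ℓ, m ≥ 1`.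
If `Φ(t) = 1/s` then `1/t = s Φ(t)/t` and `-log s = log Φ(t) =: B`, so the claim is that
`Φ(t)/t = ℓ m^r ≍ (12 + B) log(12 + B)^r`. Since `log t ≤ ℓ`, `log m ≤ ℓ` and `t ≤ Φ(t)`, the quantity
`12 + B` is comparable to `ℓ`; taking logarithms, `log(12 + B)` is comparable to `log ℓ + 1`,
which is comparable to `m` because `log ℓ ≤ m ≤ 2 + log ℓ`.
-/

open Set

noncomputable section

/-- The Young function `Φ(t) = t·log(e+t)·(log(log(e^e+t)))^r`. -/
def Phi19 (r t : ℝ) : ℝ :=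
  t * Real.log (Real.exp 1 + t) * Real.log (Real.log (Real.exp (Real.exp 1) + t)) ^ r

open Real

lemma one_le_log_exp_one_add {t : ℝ} (ht : 0 ≤ t) : 1 ≤ log (exp 1 + t) := by
  rw [le_log_iff_exp_le (by positivity)]
  linarith

lemma exp_one_le_log_exp_exp_one_add {t : ℝ} (ht : 0 ≤ t) : exp 1 ≤ log (exp (exp 1) + t) := by
  rw [le_log_iff_exp_le (by positivity)]
  linarith

lemma one_le_log_log_exp_exp_one_add {t : ℝ} (ht : 0 ≤ t) :
    1 ≤ log (log (exp (exp 1) + t)) := by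
  rw [le_log_iff_exp_le (by linarith [exp_pos 1, exp_one_le_log_exp_exp_one_add ht])]
  exact exp_one_le_log_exp_exp_one_add ht

lemma log_log_exp_one_add_le {t : ℝ} (ht : 0 ≤ t) :
    log (log (exp 1 + t)) ≤ log (log (exp (exp 1) + t)) := by
  have hee : exp 1 ≤ exp (exp 1) := exp_le_exp.mpr (by linarith [add_one_le_exp 1])
  gcongr
  linarith [one_le_log_exp_one_add ht]

lemma log_log_exp_exp_one_add_le {t : ℝ} (ht : 0 ≤ t) :
    log (log (exp (exp 1) + t)) ≤ 2 + log (log (exp 1 + t)) := by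
  set ℓ := log (exp 1 + t)
  have hℓ : 1 ≤ ℓ := one_le_log_exp_one_add ht
  have he : 2 ≤ exp 1 := by linarith [add_one_le_exp 1]
  have hinner : log (exp (exp 1) + t) ≤ exp 1 + ℓ :=
    calc log (exp (exp 1) + t) ≤ log (exp (exp 1) * (exp 1 + t)) := by
          gcongr; nlinarith [one_le_exp (exp_pos 1).le]
      _ = exp 1 + ℓ := by rw [log_mul (by positivity) (by positivity), log_exp]
  calc log (log (exp (exp 1) + t)) ≤ log (exp 1 * exp 1 * ℓ) := by
        gcongr
        · linarith [exp_one_le_log_exp_exp_one_add ht, exp_pos 1]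
        · refine hinner.trans ?_
          nlinarith [mul_nonneg (mul_nonneg (exp_pos 1).le (by linarith : (0 : ℝ) ≤ ℓ))
            (sub_nonneg.2 he)]
    _ = 2 + log ℓ := by
        rw [log_mul (by positivity) (by positivity), log_mul (by positivity) (by positivity),
          log_exp]
        ring

variable {r : ℝ}

lemma Phi19_zero : Phi19 r 0 = 0 := by simp [Phi19]

lemma Phi19_div_self {t : ℝ} (ht : t ≠ 0) :
    Phi19 r t / t = log (exp 1 + t) * log (log (exp (exp 1) + t)) ^ r := by
  rw [Phi19, mul_assoc, mul_div_cancel_left₀ _ ht]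

lemma pos_of_one_le_Phi19 {t : ℝ} (ht : 0 ≤ t) (hΦ : 1 ≤ Phi19 r t) : 0 < t :=
  ht.lt_of_ne (by rintro rfl; norm_num [Phi19_zero] at hΦ)

lemma le_Phi19 (hr : 0 ≤ r) {t : ℝ} (ht : 0 ≤ t) : t ≤ Phi19 r t := by
  have hℓ := one_le_log_exp_one_add ht
  have hm := one_le_rpow (one_le_log_log_exp_exp_one_add ht) hr
  calc t ≤ t * log (exp 1 + t) := le_mul_of_one_le_right ht hℓ
    _ ≤ Phi19 r t := le_mul_of_one_le_right (by positivity) hm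

lemma strictMonoOn_Phi19 (hr : 0 ≤ r) : StrictMonoOn (Phi19 r) (Ici 0) := by
  intro a ha b hb hab
  rw [mem_Ici] at ha hb
  have hℓ : log (exp 1 + a) ≤ log (exp 1 + b) := by gcongr
  have hm : log (log (exp (exp 1) + a)) ^ r ≤ log (log (exp (exp 1) + b)) ^ r := by
    have := exp_one_le_log_exp_exp_one_add ha
    have := exp_pos 1
    gcongr
    · linarith [one_le_log_log_exp_exp_one_add ha]
    · linarith
  have hℓa := one_le_log_exp_one_add ha
  have hℓb := one_le_log_exp_one_add hb
  have hma := one_le_rpow (one_le_log_log_exp_exp_one_add ha) hr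
  unfold Phi19
  calc a * log (exp 1 + a) * log (log (exp (exp 1) + a)) ^ r
      < b * log (exp 1 + a) * log (log (exp (exp 1) + a)) ^ r := by gcongr
    _ ≤ b * log (exp 1 + b) * log (log (exp (exp 1) + b)) ^ r := by gcongr

lemma continuousOn_Phi19 (hr : 0 ≤ r) : ContinuousOn (Phi19 r) (Ici 0) := by
  have hℓ : ContinuousOn (fun t ↦ log (exp 1 + t)) (Ici 0) :=
    ContinuousOn.log (by fun_prop) fun t ht ↦ by have : (0 : ℝ) ≤ t := ht; positivity
  have hm : ContinuousOn (fun t ↦ log (log (exp (exp 1) + t))) (Ici 0) := by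
    refine ContinuousOn.log (ContinuousOn.log (by fun_prop) fun t ht ↦ ?_) fun t ht ↦ ?_
    · have : (0 : ℝ) ≤ t := ht; positivity
    · linarith [exp_one_le_log_exp_exp_one_add (t := t) ht, exp_pos 1]
  exact (continuousOn_id.mul hℓ).mul (hm.rpow_const fun _ _ ↦ Or.inr hr)

lemma image_Phi19_Ici (hr : 0 ≤ r) : Phi19 r '' Ici 0 = Ici 0 := by
  refine (image_subset_iff.mpr fun t (ht : 0 ≤ t) ↦ ht.trans (le_Phi19 hr ht)).antisymm ?_
  intro y (hy : 0 ≤ y)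
  have hIVT := intermediate_value_Icc hy ((continuousOn_Phi19 hr).mono Icc_subset_Ici_self)
  rw [Phi19_zero] at hIVT
  exact image_mono Icc_subset_Ici_self (hIVT ⟨hy, le_Phi19 hr hy⟩)

lemma mul_rpow_le_rpow_mul_mul_rpow {a b p q c r : ℝ} (ha : 0 ≤ a) (hp : 0 ≤ p) (hq : 0 ≤ q)
    (hc : 0 ≤ c) (hr : 0 ≤ r) (hab : a ≤ b) (hpq : p ≤ c * q) :
    a * p ^ r ≤ c ^ r * (b * q ^ r) :=
  calc a * p ^ r ≤ b * (c * q) ^ r := by gcongr; linarith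
    _ = c ^ r * (b * q ^ r) := by rw [mul_rpow hc hq]; ring

lemma log_Phi19_le (hr : 0 ≤ r) {t : ℝ} (ht : 0 < t) :
    log (Phi19 r t) ≤ (2 + r) * log (exp 1 + t) := by
  set ℓ := log (exp 1 + t)
  set m := log (log (exp (exp 1) + t))
  have hℓ : 1 ≤ ℓ := one_le_log_exp_one_add ht.le
  have hm : 1 ≤ m := one_le_log_log_exp_exp_one_add ht.le
  have hlog_t : log t ≤ ℓ := log_le_log ht (by linarith [exp_pos 1, add_one_le_exp 1])
  have hlog_ℓ : log ℓ ≤ ℓ - 1 := log_le_sub_one_of_pos (by linarith)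
  have hlog_m : log m ≤ ℓ := by
    linarith [log_le_sub_one_of_pos (by linarith : 0 < m), log_log_exp_exp_one_add_le ht.le]
  have hΦ : log (Phi19 r t) = log t + log ℓ + r * log m := by
    rw [Phi19, log_mul (by positivity) (by positivity), log_mul (by positivity) (by positivity),
      log_rpow (by positivity)]
  rw [hΦ]
  nlinarith

lemma log_exp_one_add_le_log_Phi19 (hr : 0 ≤ r) {t : ℝ} (ht : 0 ≤ t) (hΦ : 1 ≤ Phi19 r t) :
    log (exp 1 + t) ≤ 3 + log (Phi19 r t) := by
  have he : log (exp 1 + 1) ≤ 3 := by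
    linarith [log_le_sub_one_of_pos (by positivity : 0 < exp 1 + 1), exp_one_lt_three]
  calc log (exp 1 + t) ≤ log ((exp 1 + 1) * Phi19 r t) := by
        gcongr; nlinarith [le_Phi19 hr ht, exp_pos 1]
    _ ≤ 3 + log (Phi19 r t) := by
        rw [log_mul (by positivity) (by positivity)]; linarith

lemma two_le_log_twelve_add {B : ℝ} (hB : 0 ≤ B) : 2 ≤ log (12 + B) := by
  rw [le_log_iff_exp_le (by positivity), show (2 : ℝ) = 1 + 1 by norm_num, exp_add]
  nlinarith [exp_one_lt_three, exp_pos 1]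

lemma Phi19_div_self_le (hr : 0 ≤ r) {t : ℝ} (ht : 0 ≤ t) (hΦ : 1 ≤ Phi19 r t) :
    Phi19 r t / t ≤ 2 ^ r * ((12 + log (Phi19 r t)) * log (12 + log (Phi19 r t)) ^ r) := by
  rw [Phi19_div_self (pos_of_one_le_Phi19 ht hΦ).ne']
  have hB : 0 ≤ log (Phi19 r t) := log_nonneg hΦ
  have hℓ := one_le_log_exp_one_add ht
  have hℓB : log (exp 1 + t) ≤ 12 + log (Phi19 r t) := by
    linarith [log_exp_one_add_le_log_Phi19 hr ht hΦ]
  have hmL : log (log (exp (exp 1) + t)) ≤ 2 * log (12 + log (Phi19 r t)) := by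
    have := log_le_log (by linarith) hℓB
    linarith [log_log_exp_exp_one_add_le ht, two_le_log_twelve_add hB]
  refine mul_rpow_le_rpow_mul_mul_rpow (by linarith) ?_ ?_ zero_le_two hr hℓB hmL
  · linarith [one_le_log_log_exp_exp_one_add ht]
  · linarith [two_le_log_twelve_add hB]

lemma le_mul_Phi19_div_self (hr : 0 ≤ r) {t : ℝ} (ht : 0 ≤ t) (hΦ : 1 ≤ Phi19 r t) :
    (12 + log (Phi19 r t)) * log (12 + log (Phi19 r t)) ^ r ≤
      (14 + r) * (1 + log (14 + r)) ^ r * (Phi19 r t / t) := by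
  have ht0 := pos_of_one_le_Phi19 ht hΦ
  rw [Phi19_div_self ht0.ne']
  have hB : 0 ≤ log (Phi19 r t) := log_nonneg hΦ
  have hℓ := one_le_log_exp_one_add ht
  have hm := one_le_log_log_exp_exp_one_add ht
  have hK : 0 ≤ log (14 + r) := log_nonneg (by linarith)
  have hBℓ : 12 + log (Phi19 r t) ≤ (14 + r) * log (exp 1 + t) := by
    nlinarith [log_Phi19_le hr ht0]
  have hLm : log (12 + log (Phi19 r t)) ≤ (1 + log (14 + r)) * log (log (exp (exp 1) + t)) :=
    calc log (12 + log (Phi19 r t)) ≤ log ((14 + r) * log (exp 1 + t)) :=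
          log_le_log (by linarith) hBℓ
      _ = log (14 + r) + log (log (exp 1 + t)) := log_mul (by linarith) (by linarith)
      _ ≤ _ := by nlinarith [log_log_exp_one_add_le ht]
  exact (mul_rpow_le_rpow_mul_mul_rpow (by linarith) (by linarith [two_le_log_twelve_add hB])
    (by linarith) (by linarith) hr hBℓ hLm).trans_eq (by ring)

/-- Appendix estimate of the paper: for `r > 1`, `Φ = Phi19 r` is strictly increasing on `[0,∞)`
and maps `[0,∞)` onto `[0,∞)`, and the fundamental function `s ↦ 1/Φ^{-1}(1/s)` is
comparable, with constants depending only on `r`, to `s(12 - log s)(log(12 - log s))^r`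
on `(0,1]`. The inverse is encoded by quantifying over all `t ≥ 0` with `Φ(t) = 1/s`. -/
theorem statement19 (r : ℝ) (hr : 1 < r) :
    StrictMonoOn (Phi19 r) (Set.Ici 0) ∧ Phi19 r '' Set.Ici 0 = Set.Ici 0 ∧
    ∃ c C : ℝ, 0 < c ∧ c ≤ C ∧ ∀ s ∈ Set.Ioc (0 : ℝ) 1, ∀ t, 0 ≤ t → Phi19 r t = 1 / s →
      c * (s * (12 - Real.log s) * Real.log (12 - Real.log s) ^ r) ≤ 1 / t ∧
      1 / t ≤ C * (s * (12 - Real.log s) * Real.log (12 - Real.log s) ^ r) := by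
  have hr0 : 0 ≤ r := by linarith
  set A := (14 + r) * (1 + log (14 + r)) ^ r
  have hA : 1 ≤ A := one_le_mul_of_one_le_of_one_le (by linarith)
    (one_le_rpow (by linarith [log_nonneg (by linarith : (1 : ℝ) ≤ 14 + r)]) hr0)
  refine ⟨strictMonoOn_Phi19 hr0, image_Phi19_Ici hr0, A⁻¹, 2 ^ r, by positivity,
    (inv_le_one_of_one_le₀ hA).trans (one_le_rpow one_le_two hr0), ?_⟩
  rintro s ⟨hs0, hs1⟩ t ht hΦ
  have hΦ1 : 1 ≤ Phi19 r t := by rw [hΦ, le_div_iff₀ hs0]; linarith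
  have hlog_s : 12 - log s = 12 + log (Phi19 r t) := by rw [hΦ, one_div, log_inv]; ring
  have hinv_t : 1 / t = s * (Phi19 r t / t) := by
    rw [hΦ]; field_simp
  rw [hlog_s, hinv_t, mul_assoc s, mul_left_comm, mul_left_comm _ s]
  refine ⟨mul_le_mul_of_nonneg_left ?_ hs0.le, mul_le_mul_of_nonneg_left ?_ hs0.le⟩
  · rw [inv_mul_le_iff₀ (by positivity)]
    exact le_mul_Phi19_div_self hr0 ht hΦ1
  · exact Phi19_div_self_le hr0 ht hΦ1
end
end
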